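/- arXiv:1706.07306 — 13 statements merged into one kernel-verified Lean document; each statement's English description precedes it below -/
import Mathlib

section
/- Let R be a ring with identity, M a unitary left R-module, k ≥ 1 an integer, a_{i,n}, b_{i,n} ∈ R for 0 ≤ i ≤ k and n ≥ 0, and g_n : M → M maps for n ≥ 0. Suppose {ρ_n}_{n≥0} is a sequence of units of R such that for every n ≥ k both a_{0,n} + a_{1,n}ρ_{n−1}^{−1} + a_{2,n}(ρ_{n−1}ρ_{n−2})^{−1} + ⋯ + a_{k,n}(ρ_{n−1}ρ_{n−2}⋯ρ_{n−k})^{−1} = ρ_n and b_{0,n} + b_{1,n}ρ_{n−1}^{−1} + b_{2,n}(ρ_{n−1}ρ_{n−2})^{−1} + ⋯ + b_{k,n}(ρ_{n−1}ρ_{n−2}⋯ρ_{n−k})^{−1} = 0 hold. Then a sequence {x_n}_{n≥0} in M satisfies x_{n+1} = Σ_{i=0}^{k} a_{i,n} x_{n−i} + g_n(Σ_{i=0}^{k} b_{i,n} x_{n−i}) for all n ≥ k if and only if the sequence t defined by t_n = x_n − ρ_{n−1} x_{n−1} (for n ≥ 1) satisfies, for all n ≥ k, t_{n+1} = −Σ_{j=1}^{k}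 Σ_{i=1}^{j} a_{j,n} γ_{ij}^{−1} t_{n−i+1} + g_n(−Σ_{j=1}^{k} Σ_{i=1}^{j} b_{j,n} γ_{ij}^{−1} t_{n−i+1}), where γ_{ij} = ρ_{n−i}ρ_{n−i−1}⋯ρ_{n−j} (so that γ_{ij}^{−1} acts on M through the group of units of R). -/
/-- The ordered product `ρ_{n-i} ρ_{n-i-1} ⋯ ρ_{n-j}` in the group of units of `R`
(the empty product, when `j < i`, is `1`). -/
def gammaProd {R : Type*} [Ring R] (ρ : ℕ → Rˣ) (n i j : ℕ) : Rˣ :=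
  ((List.range' i (j + 1 - i)).map fun l => ρ (n - l)).prod

lemma gammaProd_one {R : Type*} [Ring R] (ρ : ℕ → Rˣ) (n i j : ℕ) (h : j < i) :
    gammaProd ρ n i j = 1 := by
  unfold gammaProd
  rw [Nat.sub_eq_zero_of_le h]
  simp

lemma gammaProd_succ {R : Type*} [Ring R] (ρ : ℕ → Rˣ) (n i j : ℕ) (h : i ≤ j + 1) :
    gammaProd ρ n i (j + 1) = gammaProd ρ n i j * ρ (n - (j + 1)) := by
  unfold gammaProd
  have h1 : j + 1 + 1 - i = (j + 1 - i) + 1 := by omega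
  rw [h1, List.range'_concat]
  simp only [List.map_append, List.map_cons, List.map_nil, List.prod_append, List.prod_cons,
    List.prod_nil, mul_one]
  congr 3
  omega

section main

variable {R M : Type*} [Ring R] [AddCommGroup M] [Module R M]

lemma telescope (ρ : ℕ → Rˣ) (x t : ℕ → M)
    (ht : ∀ n, 1 ≤ n → t n = x n - (ρ (n - 1) : R) • x (n - 1))
    (n : ℕ) : ∀ j, j ≤ n →
    ∑ i ∈ Finset.Icc 1 j, (((gammaProd ρ n i j)⁻¹ : Rˣ) : R) • t (n - i + 1) =
      (((gammaProd ρ n 1 j)⁻¹ : Rˣ) : R) • x n - x (n - j) := by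
  intro j
  induction j with
  | zero =>
    intro _
    simp [gammaProd_one ρ n 1 0 (by norm_num)]
  | succ j ih =>
    intro hjn
    have hj : j ≤ n := by omega
    rw [Finset.sum_Icc_succ_top (by omega : 1 ≤ j + 1)]
    have hrw : ∀ i ∈ Finset.Icc 1 j,
        (((gammaProd ρ n i (j + 1))⁻¹ : Rˣ) : R) • t (n - i + 1) =
        (((ρ (n - (j + 1)))⁻¹ : Rˣ) : R) •
          ((((gammaProd ρ n i j)⁻¹ : Rˣ) : R) • t (n - i + 1)) := by
      intro i hi
      rw [gammaProd_succ ρ n i j (by simp at hi; omega), mul_inv_rev, Units.val_mul, mul_smul]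
    rw [Finset.sum_congr rfl hrw, ← Finset.smul_sum, ih hj]
    have hlast : gammaProd ρ n (j + 1) (j + 1) = ρ (n - (j + 1)) := by
      rw [gammaProd_succ ρ n (j + 1) j (le_refl _), gammaProd_one ρ n (j + 1) j (by omega),
        one_mul]
    rw [hlast]
    have h1 : n - (j + 1) + 1 = n - j := by omega
    have h2 : t (n - j) = x (n - j) - (ρ (n - (j + 1)) : R) • x (n - (j + 1)) := by
      have := ht (n - j) (by omega)
      rwa [show n - j - 1 = n - (j + 1) by omega] at this
    rw [h1, h2]
    rw [gammaProd_succ ρ n 1 j (by omega), mul_inv_rev, Units.val_mul, mul_smul]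
    set u : R := (((ρ (n - (j + 1)))⁻¹ : Rˣ) : R) with hudef
    have hu : u • ((ρ (n - (j + 1)) : R) • x (n - (j + 1))) = x (n - (j + 1)) := by
      rw [hudef, smul_smul, ← Units.val_mul, inv_mul_cancel, Units.val_one, one_smul]
    rw [smul_sub, smul_sub, hu]
    abel

lemma key_sum (ρ : ℕ → Rˣ) (x t : ℕ → M)
    (ht : ∀ n, 1 ≤ n → t n = x n - (ρ (n - 1) : R) • x (n - 1))
    (c : ℕ → ℕ → R) (k n : ℕ) (hkn : k ≤ n) :
    ∑ j ∈ Finset.range (k + 1), c j n • x (n - j) =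
      (∑ j ∈ Finset.range (k + 1), c j n * (((gammaProd ρ n 1 j)⁻¹ : Rˣ) : R)) • x n -
      ∑ j ∈ Finset.Icc 1 k, ∑ i ∈ Finset.Icc 1 j,
        (c j n * (((gammaProd ρ n i j)⁻¹ : Rˣ) : R)) • t (n - i + 1) := by
  have step : ∀ j ∈ Finset.range (k + 1),
      c j n • x (n - j) =
        (c j n * (((gammaProd ρ n 1 j)⁻¹ : Rˣ) : R)) • x n -
        ∑ i ∈ Finset.Icc 1 j, (c j n * (((gammaProd ρ n i j)⁻¹ : Rˣ) : R)) • t (n - i + 1) := by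
    intro j hj
    simp only [Finset.mem_range] at hj
    have htel := telescope ρ x t ht n j (by omega)
    have : x (n - j) = (((gammaProd ρ n 1 j)⁻¹ : Rˣ) : R) • x n -
        ∑ i ∈ Finset.Icc 1 j, (((gammaProd ρ n i j)⁻¹ : Rˣ) : R) • t (n - i + 1) := by
      rw [htel]; abel
    rw [this, smul_sub, smul_smul, Finset.smul_sum]
    congr 1
    apply Finset.sum_congr rfl
    intro i _
    rw [smul_smul]
  rw [Finset.sum_congr rfl step, Finset.sum_sub_distrib, Finset.sum_smul]
  congr 1
  symm
  apply Finset.sum_subset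
  · intro y hy
    simp only [Finset.mem_Icc] at hy
    simp only [Finset.mem_range]
    omega
  · intro j hj hj2
    simp only [Finset.mem_range] at hj
    simp only [Finset.mem_Icc, not_and, not_le] at hj2
    have : j = 0 := by omega
    subst this
    simp

end main

theorem stmt0 {R M : Type*} [Ring R] [AddCommGroup M] [Module R M]
    (k : ℕ) (hk : 1 ≤ k)
    (a b : ℕ → ℕ → R) (g : ℕ → M → M) (ρ : ℕ → Rˣ)
    (hesa : ∀ n, k ≤ n →
      ∑ i ∈ Finset.range (k + 1),
        a i n * (((gammaProd ρ n 1 i)⁻¹ : Rˣ) : R) = (ρ n : R))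
    (hesb : ∀ n, k ≤ n →
      ∑ i ∈ Finset.range (k + 1),
        b i n * (((gammaProd ρ n 1 i)⁻¹ : Rˣ) : R) = 0)
    (x t : ℕ → M)
    (ht : ∀ n, 1 ≤ n → t n = x n - (ρ (n - 1) : R) • x (n - 1)) :
    (∀ n, k ≤ n →
      x (n + 1) = ∑ i ∈ Finset.range (k + 1), a i n • x (n - i) +
        g n (∑ i ∈ Finset.range (k + 1), b i n • x (n - i))) ↔
    (∀ n, k ≤ n →
      t (n + 1) =
        -(∑ j ∈ Finset.Icc 1 k, ∑ i ∈ Finset.Icc 1 j,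
            (a j n * (((gammaProd ρ n i j)⁻¹ : Rˣ) : R)) • t (n - i + 1)) +
        g n (-(∑ j ∈ Finset.Icc 1 k, ∑ i ∈ Finset.Icc 1 j,
            (b j n * (((gammaProd ρ n i j)⁻¹ : Rˣ) : R)) • t (n - i + 1)))) := by
  have hA : ∀ n, k ≤ n →
      ∑ i ∈ Finset.range (k + 1), a i n • x (n - i) =
        (ρ n : R) • x n - ∑ j ∈ Finset.Icc 1 k, ∑ i ∈ Finset.Icc 1 j,
          (a j n * (((gammaProd ρ n i j)⁻¹ : Rˣ) : R)) • t (n - i + 1) := by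
    intro n hn
    rw [key_sum ρ x t ht a k n hn, hesa n hn]
  have hB : ∀ n, k ≤ n →
      ∑ i ∈ Finset.range (k + 1), b i n • x (n - i) =
        -(∑ j ∈ Finset.Icc 1 k, ∑ i ∈ Finset.Icc 1 j,
          (b j n * (((gammaProd ρ n i j)⁻¹ : Rˣ) : R)) • t (n - i + 1)) := by
    intro n hn
    rw [key_sum ρ x t ht b k n hn, hesb n hn, zero_smul, zero_sub]
  have htn : ∀ n, k ≤ n → t (n + 1) = x (n + 1) - (ρ n : R) • x n := by
    intro n hn
    have := ht (n + 1) (by omega)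
    simpa using this
  constructor
  · intro H n hn
    rw [htn n hn, H n hn, hA n hn, hB n hn]
    abel
  · intro H n hn
    have h1 := H n hn
    rw [htn n hn] at h1
    rw [hA n hn, hB n hn]
    rw [sub_eq_iff_eq_add] at h1
    rw [h1]
    abel
end

section
/- Let R be a commutative ring with identity, M a unitary R-module, k ≥ 1 an integer, a_0, …, a_k, b_0, …, b_k ∈ R, and g_n : M → M maps for n ≥ 0. Suppose ρ is a unit of R that is a common root of the polynomials P(λ) = λ^{k+1} − Σ_{i=0}^{k} a_i λ^{k−i} and Q(λ) = Σ_{i=0}^{k} b_i λ^{k−i}, i.e. P(ρ) = Q(ρ) = 0. Define p_i = ρ^{i+1} − a_0ρ^{i} − a_1ρ^{i−1} − ⋯ − a_i and q_i = b_0ρ^{i} + b_1ρ^{i−1} + ⋯ + b_i for i = 0, …, k−1. Then a sequence {x_n}_{n≥0} in M satisfies x_{n+1} = Σ_{i=0}^{k} a_i x_{n−i} + g_n(Σ_{i=0}^{k} b_i x_{n−i}) for all n ≥ k if and only if the sequence t defined by t_n = x_n − ρ x_{n−1} (for n ≥ 1) satisfies t_{n+1} = −Σ_{i=0}^{k−1}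 p_i t_{n−i} + g_n(Σ_{i=0}^{k−1} q_i t_{n−i}) for all n ≥ k. -/
theorem stmt2 {R M : Type*} [CommRing R] [AddCommGroup M] [Module R M]
    (k : ℕ) (hk : 1 ≤ k) (a b : ℕ → R) (g : ℕ → M → M)
    (ρ : R) (hρ : IsUnit ρ)
    (hP : ρ ^ (k + 1) - ∑ i ∈ Finset.range (k + 1), a i * ρ ^ (k - i) = 0)
    (hQ : ∑ i ∈ Finset.range (k + 1), b i * ρ ^ (k - i) = 0)
    (p q : ℕ → R)
    (hp : ∀ i, i < k →
      p i = ρ ^ (i + 1) - ∑ l ∈ Finset.range (i + 1), a l * ρ ^ (i - l))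
    (hq : ∀ i, i < k →
      q i = ∑ l ∈ Finset.range (i + 1), b l * ρ ^ (i - l))
    (x t : ℕ → M)
    (ht : ∀ n, 1 ≤ n → t n = x n - ρ • x (n - 1)) :
    (∀ n, k ≤ n →
      x (n + 1) = ∑ i ∈ Finset.range (k + 1), a i • x (n - i) +
        g n (∑ i ∈ Finset.range (k + 1), b i • x (n - i))) ↔
    (∀ n, k ≤ n →
      t (n + 1) = -(∑ i ∈ Finset.range k, p i • t (n - i)) +
        g n (∑ i ∈ Finset.range k, q i • t (n - i))) := by
  set qq : ℕ → R := fun i => ∑ l ∈ Finset.range (i + 1), b l * ρ ^ (i - l) with hqq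
  set pp : ℕ → R := fun i => ρ ^ (i + 1) - ∑ l ∈ Finset.range (i + 1), a l * ρ ^ (i - l)
    with hpp
  have hqq0 : qq 0 = b 0 := by simp [hqq]
  have hpp0 : pp 0 = ρ - a 0 := by simp [hpp]
  have hqqk : qq k = 0 := hQ
  have hppk : pp k = 0 := hP
  have hqqrec : ∀ i, qq (i + 1) = ρ * qq i + b (i + 1) := by
    intro i
    simp only [hqq]
    rw [Finset.sum_range_succ (n := i + 1), Finset.mul_sum]
    congr 1
    · apply Finset.sum_congr rfl
      intro l hl
      have hl' : l ≤ i := Nat.lt_succ_iff.mp (Finset.mem_range.mp hl)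
      have : i + 1 - l = (i - l) + 1 := by omega
      rw [this, pow_succ]
      ring
    · simp
  have hpprec : ∀ i, pp (i + 1) = ρ * pp i - a (i + 1) := by
    intro i
    simp only [hpp]
    rw [Finset.sum_range_succ (n := i + 1), mul_sub, Finset.mul_sum]
    have h1 : ∀ l ∈ Finset.range (i + 1), a l * ρ ^ (i + 1 - l) = ρ * (a l * ρ ^ (i - l)) := by
      intro l hl
      have hl' : l ≤ i := Nat.lt_succ_iff.mp (Finset.mem_range.mp hl)
      have : i + 1 - l = (i - l) + 1 := by omega
      rw [this, pow_succ]
      ring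
    rw [Finset.sum_congr rfl h1]
    simp [pow_succ]
    ring
  -- key Abel-summation lemma
  have key : ∀ (c : ℕ → R), c k = 0 → ∀ n, k ≤ n →
      ∑ i ∈ Finset.range k, c i • t (n - i)
        = c 0 • x n + ∑ i ∈ Finset.range k, (c (i + 1) - ρ * c i) • x (n - (i + 1)) := by
    intro c hc n hn
    have step : ∀ i ∈ Finset.range k,
        c i • t (n - i) = c i • x (n - i) - (ρ * c i) • x (n - (i + 1)) := by
      intro i hi
      have hi' : i < k := Finset.mem_range.mp hi
      have h1 : 1 ≤ n - i := by omega
      rw [ht _ h1]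
      have h2 : n - i - 1 = n - (i + 1) := by omega
      rw [h2, smul_sub, ← mul_smul, mul_comm]
    rw [Finset.sum_congr rfl step, Finset.sum_sub_distrib]
    have e1 : ∑ i ∈ Finset.range k, c i • x (n - i)
        = ∑ i ∈ Finset.range k, c (i + 1) • x (n - (i + 1)) + c 0 • x n := by
      have : ∑ i ∈ Finset.range k, c i • x (n - i)
          = ∑ i ∈ Finset.range (k + 1), c i • x (n - i) := by
        rw [Finset.sum_range_succ, hc, zero_smul, add_zero]
      rw [this, Finset.sum_range_succ']
      simp
    rw [e1]
    have e2 : ∑ i ∈ Finset.range k, (c (i + 1) - ρ * c i) • x (n - (i + 1))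
        = ∑ i ∈ Finset.range k, c (i + 1) • x (n - (i + 1))
          - ∑ i ∈ Finset.range k, (ρ * c i) • x (n - (i + 1)) := by
      rw [← Finset.sum_sub_distrib]
      apply Finset.sum_congr rfl
      intro i _
      rw [sub_smul]
    rw [e2]
    abel
  -- identity A
  have hA : ∀ n, k ≤ n → ∑ i ∈ Finset.range k, q i • t (n - i)
      = ∑ i ∈ Finset.range (k + 1), b i • x (n - i) := by
    intro n hn
    have hcongr : ∑ i ∈ Finset.range k, q i • t (n - i)
        = ∑ i ∈ Finset.range k, qq i • t (n - i) := by
      apply Finset.sum_congr rfl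
      intro i hi
      rw [hq i (Finset.mem_range.mp hi)]
    rw [hcongr, key qq hqqk n hn, hqq0]
    have hterm : ∀ i ∈ Finset.range k,
        (qq (i + 1) - ρ * qq i) • x (n - (i + 1)) = b (i + 1) • x (n - (i + 1)) := by
      intro i _
      rw [hqqrec i]
      ring_nf
    rw [Finset.sum_congr rfl hterm, Finset.sum_range_succ']
    simp [add_comm]
  -- identity B
  have hB : ∀ n, k ≤ n → ∑ i ∈ Finset.range k, p i • t (n - i)
      = ρ • x n - ∑ i ∈ Finset.range (k + 1), a i • x (n - i) := by
    intro n hn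
    have hcongr : ∑ i ∈ Finset.range k, p i • t (n - i)
        = ∑ i ∈ Finset.range k, pp i • t (n - i) := by
      apply Finset.sum_congr rfl
      intro i hi
      rw [hp i (Finset.mem_range.mp hi)]
    rw [hcongr, key pp hppk n hn, hpp0]
    have hterm : ∀ i ∈ Finset.range k,
        (pp (i + 1) - ρ * pp i) • x (n - (i + 1)) = -(a (i + 1) • x (n - (i + 1))) := by
      intro i _
      rw [hpprec i]
      have : ρ * pp i - a (i + 1) - ρ * pp i = -(a (i + 1)) := by ring
      rw [this, neg_smul]
    rw [Finset.sum_congr rfl hterm, Finset.sum_neg_distrib]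
    rw [Finset.sum_range_succ' (fun i => a i • x (n - i)) k]
    simp only [Nat.sub_zero, sub_smul]
    abel
  have ht1 : ∀ n : ℕ, t (n + 1) = x (n + 1) - ρ • x n := by
    intro n
    rw [ht (n + 1) (by omega)]
    simp
  constructor
  · intro h n hn
    rw [hA n hn, hB n hn, ht1 n, h n hn]
    abel
  · intro h n hn
    have := h n hn
    rw [hA n hn, hB n hn, ht1 n] at this
    have h2 : x (n + 1) = x (n + 1) - ρ • x n + ρ • x n := by abel
    rw [h2, this]
    abel
end

section
/- Let R be a ring with identity, M a unitary left R-module, and for each n ≥ 0 let a_{0,n}, a_{1,n}, b_{0,n}, b_{1,n} ∈ R with b_{0,n} and b_{1,n} units of R, and let g_n : M → M be a map. Assume that for every n ≥ 1 the identity a_{0,n} − a_{1,n} b_{1,n}^{−1} b_{0,n} + b_{0,n+1}^{−1} b_{1,n+1} = 0 holds. Then a sequence {x_n}_{n≥0} in M satisfies x_{n+1} = a_{0,n} x_n + a_{1,n} x_{n−1} + g_n(b_{0,n} x_n + b_{1,n} x_{n−1}) for all n ≥ 1 if and only if the sequence t defined by t_n = x_n + b_{0,n}^{−1} b_{1,n}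 x_{n−1} (for n ≥ 1) satisfies t_{n+1} = a_{1,n} b_{1,n}^{−1} b_{0,n} t_n + g_n(b_{0,n} t_n) for all n ≥ 1. -/
theorem stmt3 {R M : Type*} [Ring R] [AddCommGroup M] [Module R M]
    (a0 a1 : ℕ → R) (b0 b1 : ℕ → Rˣ) (g : ℕ → M → M)
    (hid : ∀ n, 1 ≤ n →
      a0 n - a1 n * (((b1 n)⁻¹ : Rˣ) : R) * ((b0 n : Rˣ) : R) +
        (((b0 (n + 1))⁻¹ : Rˣ) : R) * ((b1 (n + 1) : Rˣ) : R) = 0)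
    (x t : ℕ → M)
    (ht : ∀ n, 1 ≤ n →
      t n = x n + ((((b0 n)⁻¹ : Rˣ) : R) * ((b1 n : Rˣ) : R)) • x (n - 1)) :
    (∀ n, 1 ≤ n →
      x (n + 1) = a0 n • x n + a1 n • x (n - 1) +
        g n ((b0 n : R) • x n + (b1 n : R) • x (n - 1))) ↔
    (∀ n, 1 ≤ n →
      t (n + 1) = (a1 n * (((b1 n)⁻¹ : Rˣ) : R) * ((b0 n : Rˣ) : R)) • t n +
        g n ((b0 n : R) • t n)) := by
  have key : ∀ n, 1 ≤ n → ((b0 n : Rˣ) : R) • t n =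
      ((b0 n : Rˣ) : R) • x n + ((b1 n : Rˣ) : R) • x (n - 1) := by
    intro n hn
    rw [ht n hn, smul_add, smul_smul, ← mul_assoc, Units.mul_inv, one_mul]
  have hc : ∀ n, 1 ≤ n → (((b0 (n + 1))⁻¹ : Rˣ) : R) * ((b1 (n + 1) : Rˣ) : R) =
      a1 n * (((b1 n)⁻¹ : Rˣ) : R) * ((b0 n : Rˣ) : R) - a0 n := by
    intro n hn
    rw [eq_neg_of_add_eq_zero_right (hid n hn), neg_sub]
  constructor
  · intro h n hn
    have h2 := ht (n + 1) (by omega)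
    simp only [Nat.add_sub_cancel] at h2
    rw [h2, h n hn, key n hn, ht n hn, hc n hn]
    simp only [smul_add, smul_smul, sub_smul, mul_assoc, Units.mul_inv_cancel_left, Units.inv_mul, mul_one]
    abel
  · intro h n hn
    have h2 := ht (n + 1) (by omega)
    simp only [Nat.add_sub_cancel] at h2
    have h3 := h n hn
    rw [h2, key n hn, ht n hn, hc n hn] at h3
    rw [eq_sub_of_add_eq h3]
    simp only [smul_add, smul_smul, sub_smul, mul_assoc, Units.mul_inv_cancel_left, Units.inv_mul, mul_one]
    abel
end

section
/- Let R be a commutative ring with identity, M a unitary R-module, a_0, a_1, b_0, b_1 ∈ R with b_0 and b_1 units of R, and let g_n : M → M be maps for n ≥ 0. Assume a_0 − a_1 b_1^{−1} b_0 + b_0^{−1} b_1 = 0. Then a sequence {x_n}_{n≥0} in M satisfies x_{n+1} = a_0 x_n + a_1 x_{n−1} + g_n(b_0 x_n + b_1 x_{n−1}) for all n ≥ 1 if and only if the sequence t defined by t_n = x_n + b_0^{−1} b_1 x_{n−1} (for n ≥ 1) satisfies t_{n+1} = a_1 b_1^{−1} b_0 t_n + g_n(b_0 t_n) for all n ≥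 1. -/
theorem stmt4 {R M : Type*} [CommRing R] [AddCommGroup M] [Module R M]
    (a0 a1 : R) (b0 b1 : Rˣ) (g : ℕ → M → M)
    (hid : a0 - a1 * ((b1⁻¹ : Rˣ) : R) * ((b0 : Rˣ) : R) +
      ((b0⁻¹ : Rˣ) : R) * ((b1 : Rˣ) : R) = 0)
    (x t : ℕ → M)
    (ht : ∀ n, 1 ≤ n →
      t n = x n + (((b0⁻¹ : Rˣ) : R) * ((b1 : Rˣ) : R)) • x (n - 1)) :
    (∀ n, 1 ≤ n →
      x (n + 1) = a0 • x n + a1 • x (n - 1) +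
        g n ((b0 : R) • x n + (b1 : R) • x (n - 1))) ↔
    (∀ n, 1 ≤ n →
      t (n + 1) = (a1 * ((b1⁻¹ : Rˣ) : R) * ((b0 : Rˣ) : R)) • t n +
        g n ((b0 : R) • t n)) := by
  have h0 : ((b0 : Rˣ) : R) * ((b0⁻¹ : Rˣ) : R) = 1 := Units.mul_inv b0
  have h1 : ((b1⁻¹ : Rˣ) : R) * ((b1 : Rˣ) : R) = 1 := Units.inv_mul b1
  have hb : ∀ m : M, (b0 : R) • ((((b0⁻¹ : Rˣ) : R) * ((b1 : Rˣ) : R)) • m)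
      = (b1 : R) • m := by
    intro m
    rw [smul_smul, ← mul_assoc, h0, one_mul]
  constructor
  · intro h n hn
    rw [ht (n + 1) (by omega), ht n hn, Nat.add_sub_cancel, h n hn]
    simp only [smul_add, hb]
    match_scalars
    · linear_combination hid
    · linear_combination -(a1 * ((b1⁻¹ : Rˣ) : R) * ((b1 : Rˣ) : R) * h0) - a1 * h1
    · ring
  · intro h n hn
    have key := h n hn
    rw [ht (n + 1) (by omega), ht n hn, Nat.add_sub_cancel] at key
    simp only [smul_add, hb] at key
    have : x (n + 1) = (a1 * ((b1⁻¹ : Rˣ) : R) * ((b0 : Rˣ) : R)) • x n +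
        (a1 * ((b1⁻¹ : Rˣ) : R) * ((b0 : Rˣ) : R)) •
          ((((b0⁻¹ : Rˣ) : R) * ((b1 : Rˣ) : R)) • x (n - 1)) +
        g n ((b0 : R) • x n + (b1 : R) • x (n - 1)) -
        (((b0⁻¹ : Rˣ) : R) * ((b1 : Rˣ) : R)) • x n := by
      rw [← key]; abel
    rw [this]
    match_scalars
    · linear_combination -hid
    · linear_combination a1 * ((b1⁻¹ : Rˣ) : R) * ((b1 : Rˣ) : R) * h0 + a1 * h1
    · ring
end

section
/- Let R be an integral domain, M a unitary R-module, k ≥ 2 an integer, a_0, …, a_k, b_0, …, b_k ∈ R, and g_n : M → M maps for n ≥ 0. Let ρ and ρ₁ be units of R such that P(ρ) = Q(ρ) = 0 and either (ρ₁ ≠ ρ with P(ρ₁) = Q(ρ₁) = 0) or (ρ₁ = ρ with P′(ρ) = Q′(ρ) = 0), where P(λ) = λ^{k+1} − Σ_{i=0}^{k} a_i λ^{k−i} and Q(λ) = Σ_{i=0}^{k} b_i λ^{k−i}. Define p_i = ρ^{i+1} − a_0ρ^{i} − ⋯ − a_i and q_i = b_0ρ^{i} + ⋯ + b_i for i = 0,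 …, k−1, and then p_{1,i} = ρ₁^{i+1} + p_0ρ₁^{i} + ⋯ + p_i and q_{1,i} = q_0ρ₁^{i} + q_1ρ₁^{i−1} + ⋯ + q_i for i = 0, …, k−2. Then a sequence {x_n}_{n≥0} in M satisfies x_{n+1} = Σ_{i=0}^{k} a_i x_{n−i} + g_n(Σ_{i=0}^{k} b_i x_{n−i}) for all n ≥ k if and only if the sequence r obtained via t_n = x_n − ρ x_{n−1} (n ≥ 1) and r_n = t_n − ρ₁ t_{n−1} (n ≥ 2) satisfies r_{n+1} = −Σ_{i=0}^{k−2} p_{1,i} r_{n−i} + g_n(Σ_{i=0}^{k−2} q_{1,i} r_{n−i}) for all n ≥ k. -/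
open Polynomial Finset

section Aux

variable {R : Type*} [CommRing R]

noncomputable def auxS (c : ℕ → R) (m : ℕ) : R[X] :=
  ∑ l ∈ Finset.range m, C (c l) * X ^ (m - 1 - l)

lemma auxS_zero (c : ℕ → R) : auxS c 0 = 0 := by simp [auxS]

lemma auxS_succ (c : ℕ → R) (m : ℕ) :
    auxS c (m + 1) = X * auxS c m + C (c m) := by
  unfold auxS
  rw [Finset.sum_range_succ, Finset.mul_sum]
  congr 1
  · refine Finset.sum_congr rfl fun l hl => ?_
    rw [Finset.mem_range] at hl
    rw [show m + 1 - 1 - l = (m - 1 - l) + 1 by omega]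
    ring
  · rw [show m + 1 - 1 - m = 0 by omega]
    ring

noncomputable def peF (a : ℕ → R) (ρ : R) (l : ℕ) : R :=
  ((X : R[X]) ^ (l + 1) - auxS a (l + 1)).eval ρ

noncomputable def qeF (b : ℕ → R) (ρ : R) (l : ℕ) : R :=
  (auxS b (l + 1)).eval ρ

lemma peF_zero (a : ℕ → R) (ρ : R) : peF a ρ 0 = ρ - a 0 := by
  simp [peF, auxS]

lemma peF_succ (a : ℕ → R) (ρ : R) (l : ℕ) :
    peF a ρ (l + 1) = ρ * peF a ρ l - a (l + 1) := by
  unfold peF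
  rw [auxS_succ]
  simp only [eval_sub, eval_add, eval_mul, eval_pow, eval_X, eval_C]
  ring

lemma qeF_zero (b : ℕ → R) (ρ : R) : qeF b ρ 0 = b 0 := by
  simp [qeF, auxS]

lemma qeF_succ (b : ℕ → R) (ρ : R) (l : ℕ) :
    qeF b ρ (l + 1) = ρ * qeF b ρ l + b (l + 1) := by
  unfold qeF
  rw [auxS_succ]
  simp only [eval_add, eval_mul, eval_X, eval_C]

lemma keyP (a : ℕ → R) (ρ : R) (m : ℕ) :
    (X - C ρ) * ((X : R[X]) ^ m + auxS (peF a ρ) m)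
      = ((X : R[X]) ^ (m + 1) - auxS a (m + 1)) - C (peF a ρ m) := by
  induction m with
  | zero =>
    rw [auxS_zero, auxS_succ, auxS_zero, peF_zero, map_sub]
    ring
  | succ m ih =>
    rw [auxS_succ (peF a ρ) m, auxS_succ a (m + 1), peF_succ, map_sub, map_mul]
    linear_combination (X : R[X]) * ih

lemma keyQ (b : ℕ → R) (ρ : R) (m : ℕ) :
    (X - C ρ) * auxS (qeF b ρ) m = auxS b (m + 1) - C (qeF b ρ m) := by
  induction m with
  | zero =>
    rw [auxS_zero, auxS_succ, auxS_zero, qeF_zero]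
    ring
  | succ m ih =>
    rw [auxS_succ (qeF b ρ) m, auxS_succ b (m + 1), qeF_succ, map_add, map_mul]
    linear_combination (X : R[X]) * ih

noncomputable def sF (a : ℕ → R) (ρ ρ1 : R) (m : ℕ) : R :=
  ((X : R[X]) ^ m + auxS (peF a ρ) m).eval ρ1

noncomputable def tF (b : ℕ → R) (ρ ρ1 : R) (m : ℕ) : R :=
  (auxS (qeF b ρ) m).eval ρ1

lemma sF_zero (a : ℕ → R) (ρ ρ1 : R) : sF a ρ ρ1 0 = 1 := by simp [sF, auxS_zero]

lemma sF_succ (a : ℕ → R) (ρ ρ1 : R) (m : ℕ) :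
    sF a ρ ρ1 (m + 1) = ρ1 * sF a ρ ρ1 m + peF a ρ m := by
  unfold sF
  rw [auxS_succ]
  simp only [eval_add, eval_mul, eval_pow, eval_X, eval_C]
  ring

lemma tF_zero (b : ℕ → R) (ρ ρ1 : R) : tF b ρ ρ1 0 = 0 := by simp [tF, auxS_zero]

lemma tF_succ (b : ℕ → R) (ρ ρ1 : R) (m : ℕ) :
    tF b ρ ρ1 (m + 1) = ρ1 * tF b ρ ρ1 m + qeF b ρ m := by
  unfold tF
  rw [auxS_succ]
  simp only [eval_add, eval_mul, eval_X, eval_C]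

lemma sF_eq_zero_of_ne [IsDomain R] (a : ℕ → R) {ρ ρ1 : R} (m : ℕ) (hne : ρ1 ≠ ρ)
    (h1 : ((X : R[X]) ^ (m + 1) - auxS a (m + 1)).eval ρ1 = 0)
    (h2 : peF a ρ m = 0) : sF a ρ ρ1 m = 0 := by
  have h := congrArg (eval ρ1) (keyP a ρ m)
  rw [eval_mul, eval_sub, eval_X, eval_C, eval_sub, h1, eval_C, h2, sub_zero] at h
  rcases mul_eq_zero.mp h with h' | h'
  · exact absurd (sub_eq_zero.mp h') hne
  · exact h'

lemma tF_eq_zero_of_ne [IsDomain R] (b : ℕ → R) {ρ ρ1 : R} (m : ℕ) (hne : ρ1 ≠ ρ)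
    (h1 : (auxS b (m + 1)).eval ρ1 = 0) (h2 : qeF b ρ m = 0) : tF b ρ ρ1 m = 0 := by
  have h := congrArg (eval ρ1) (keyQ b ρ m)
  rw [eval_mul, eval_sub, eval_X, eval_C, eval_sub, h1, eval_C, h2, sub_zero] at h
  rcases mul_eq_zero.mp h with h' | h'
  · exact absurd (sub_eq_zero.mp h') hne
  · exact h'

lemma sF_eq_zero_of_deriv (a : ℕ → R) {ρ : R} (m : ℕ)
    (h1 : (derivative ((X : R[X]) ^ (m + 1) - auxS a (m + 1))).eval ρ = 0) :
    sF a ρ ρ m = 0 := by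
  have h := congrArg (eval ρ) (congrArg derivative (keyP a ρ m))
  simp only [derivative_mul, derivative_sub, derivative_X, derivative_C, eval_add, eval_mul,
    eval_sub, eval_one, eval_zero, eval_X, eval_C, eval_pow, sub_self, zero_mul, mul_zero,
    add_zero, sub_zero, one_mul, zero_sub, neg_zero] at h
  simp only [derivative_sub, eval_sub] at h1
  unfold sF
  simp only [eval_add, eval_pow, eval_X]
  linear_combination h + h1

lemma tF_eq_zero_of_deriv (b : ℕ → R) {ρ : R} (m : ℕ)
    (h1 : (derivative (auxS b (m + 1))).eval ρ = 0) : tF b ρ ρ m = 0 := by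
  have h := congrArg (eval ρ) (congrArg derivative (keyQ b ρ m))
  simp only [derivative_mul, derivative_sub, derivative_X, derivative_C, eval_add, eval_mul,
    eval_sub, eval_one, eval_zero, eval_X, eval_C, sub_self, zero_mul, mul_zero, add_zero,
    sub_zero, one_mul, zero_sub, neg_zero] at h
  exact h.trans h1

lemma expandM {M : Type*} [AddCommGroup M] [Module R M]
    (ρ : R) (c : ℕ → R) (y z : ℕ → M) (n : ℕ) :
    ∀ m, 1 ≤ m → m ≤ n → (∀ j, n + 1 - m ≤ j → z j = y j - ρ • y (j - 1)) →
    ∑ i ∈ Finset.range m, c i • z (n - i)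
      = c 0 • y n + (∑ i ∈ Finset.range (m - 1), (c (i + 1) - ρ * c i) • y (n - 1 - i))
        - (ρ * c (m - 1)) • y (n - m) := by
  intro m
  induction m with
  | zero => intro h; exact absurd h (by norm_num)
  | succ m ih =>
    intro _ hmn hz
    rcases Nat.eq_zero_or_pos m with rfl | hm
    · rw [Finset.sum_range_succ, hz (n - 0) (by omega)]
      simp only [Finset.range_zero, Finset.sum_empty, Nat.add_sub_cancel, Nat.sub_zero,
        Nat.sub_self, Nat.zero_add, zero_add]
      module
    · have hs : ∑ i ∈ Finset.range m, (c (i + 1) - ρ * c i) • y (n - 1 - i)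
          = (∑ i ∈ Finset.range (m - 1), (c (i + 1) - ρ * c i) • y (n - 1 - i))
            + (c m - ρ * c (m - 1)) • y (n - m) := by
        conv_lhs => rw [show m = m - 1 + 1 from by omega]
        rw [Finset.sum_range_succ, show m - 1 + 1 = m from by omega,
          show n - 1 - (m - 1) = n - m from by omega]
      rw [Finset.sum_range_succ, ih hm (by omega) (fun j hj => hz j (by omega)),
        hz (n - m) (by omega), Nat.add_sub_cancel]
      rw [hs, show n - m - 1 = n - (m + 1) from by omega]
      module

end Aux

theorem stmt10 {R M : Type*} [CommRing R] [IsDomain R] [AddCommGroup M] [Module R M]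
    (k : ℕ) (hk : 2 ≤ k) (a b : ℕ → R) (g : ℕ → M → M)
    (ρ ρ1 : R) (hρ : IsUnit ρ) (hρ1 : IsUnit ρ1)
    (P Q : R[X])
    (hPdef : P = X ^ (k + 1) - ∑ i ∈ Finset.range (k + 1), C (a i) * X ^ (k - i))
    (hQdef : Q = ∑ i ∈ Finset.range (k + 1), C (b i) * X ^ (k - i))
    (hPρ : P.eval ρ = 0) (hQρ : Q.eval ρ = 0)
    (hcase : (ρ1 ≠ ρ ∧ P.eval ρ1 = 0 ∧ Q.eval ρ1 = 0) ∨
             (ρ1 = ρ ∧ P.derivative.eval ρ = 0 ∧ Q.derivative.eval ρ = 0))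
    (p q p1 q1 : ℕ → R)
    (hp : ∀ i, i < k →
      p i = ρ ^ (i + 1) - ∑ l ∈ Finset.range (i + 1), a l * ρ ^ (i - l))
    (hq : ∀ i, i < k →
      q i = ∑ l ∈ Finset.range (i + 1), b l * ρ ^ (i - l))
    (hp1 : ∀ i, i < k - 1 →
      p1 i = ρ1 ^ (i + 1) + ∑ l ∈ Finset.range (i + 1), p l * ρ1 ^ (i - l))
    (hq1 : ∀ i, i < k - 1 →
      q1 i = ∑ l ∈ Finset.range (i + 1), q l * ρ1 ^ (i - l))
    (x t r : ℕ → M)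
    (ht : ∀ n, 1 ≤ n → t n = x n - ρ • x (n - 1))
    (hr : ∀ n, 2 ≤ n → r n = t n - ρ1 • t (n - 1)) :
    (∀ n, k ≤ n →
      x (n + 1) = ∑ i ∈ Finset.range (k + 1), a i • x (n - i) +
        g n (∑ i ∈ Finset.range (k + 1), b i • x (n - i))) ↔
    (∀ n, k ≤ n →
      r (n + 1) = -(∑ i ∈ Finset.range (k - 1), p1 i • r (n - i)) +
        g n (∑ i ∈ Finset.range (k - 1), q1 i • r (n - i))) := by
  obtain ⟨k', rfl⟩ : ∃ k', k = k' + 2 := ⟨k - 2, by omega⟩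
  simp only [show k' + 2 - 1 = k' + 1 from by omega] at hp1 hq1 ⊢
  -- identify P and Q with auxS expressions
  have hP' : P = (X : R[X]) ^ (k' + 2 + 1) - auxS a (k' + 2 + 1) := by
    rw [hPdef]
    congr 1
  have hQ' : Q = auxS b (k' + 2 + 1) := by
    rw [hQdef]
    rfl
  -- identify the scalar sequences
  have hpe : ∀ i, i < k' + 2 → p i = peF a ρ i := by
    intro i hi
    rw [hp i hi]
    simp [peF, auxS, eval_finset_sum, Nat.add_sub_cancel]
  have hqe : ∀ i, i < k' + 2 → q i = qeF b ρ i := by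
    intro i hi
    rw [hq i hi]
    simp [qeF, auxS, eval_finset_sum, Nat.add_sub_cancel]
  have hp1e : ∀ i, i < k' + 1 → p1 i = sF a ρ ρ1 (i + 1) := by
    intro i hi
    rw [hp1 i hi]
    have hc : ∑ l ∈ Finset.range (i + 1), p l * ρ1 ^ (i - l)
        = ∑ l ∈ Finset.range (i + 1), peF a ρ l * ρ1 ^ (i - l) :=
      Finset.sum_congr rfl fun l hl => by
        rw [Finset.mem_range] at hl
        rw [hpe l (by omega)]
    rw [hc]
    simp [sF, auxS, eval_finset_sum, Nat.add_sub_cancel]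
  have hq1e : ∀ i, i < k' + 1 → q1 i = tF b ρ ρ1 (i + 1) := by
    intro i hi
    rw [hq1 i hi]
    have hc : ∑ l ∈ Finset.range (i + 1), q l * ρ1 ^ (i - l)
        = ∑ l ∈ Finset.range (i + 1), qeF b ρ l * ρ1 ^ (i - l) :=
      Finset.sum_congr rfl fun l hl => by
        rw [Finset.mem_range] at hl
        rw [hqe l (by omega)]
    rw [hc]
    simp [tF, auxS, eval_finset_sum, Nat.add_sub_cancel]
  -- vanishing facts
  have hpek : peF a ρ (k' + 2) = 0 := by
    have h : peF a ρ (k' + 2) = P.eval ρ := by rw [hP']; rfl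
    rw [h, hPρ]
  have hqek : qeF b ρ (k' + 2) = 0 := by
    have h : qeF b ρ (k' + 2) = Q.eval ρ := by rw [hQ']; rfl
    rw [h, hQρ]
  have hstk : sF a ρ ρ1 (k' + 2) = 0 ∧ tF b ρ ρ1 (k' + 2) = 0 := by
    rcases hcase with ⟨hne, hP1, hQ1⟩ | ⟨heq, hdP, hdQ⟩
    · constructor
      · exact sF_eq_zero_of_ne a (k' + 2) hne (by rw [← hP']; exact hP1) hpek
      · exact tF_eq_zero_of_ne b (k' + 2) hne (by rw [← hQ']; exact hQ1) hqek
    · subst heq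
      constructor
      · exact sF_eq_zero_of_deriv a (k' + 2) (by rw [← hP']; exact hdP)
      · exact tF_eq_zero_of_deriv b (k' + 2) (by rw [← hQ']; exact hdQ)
  obtain ⟨hsk, htk⟩ := hstk
  -- last-coefficient identities
  have hρpe : ρ * peF a ρ (k' + 1) = a (k' + 2) := by
    have h := peF_succ a ρ (k' + 1)
    rw [show k' + 1 + 1 = k' + 2 from by omega, hpek] at h
    linear_combination -h
  have hρqe : ρ * qeF b ρ (k' + 1) = -b (k' + 2) := by
    have h := qeF_succ b ρ (k' + 1)
    rw [show k' + 1 + 1 = k' + 2 from by omega, hqek] at h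
    linear_combination -h
  have hsl : ρ1 * sF a ρ ρ1 (k' + 1) = -peF a ρ (k' + 1) := by
    have h := sF_succ a ρ ρ1 (k' + 1)
    rw [show k' + 1 + 1 = k' + 2 from by omega, hsk] at h
    linear_combination -h
  have htl : ρ1 * tF b ρ ρ1 (k' + 1) = -qeF b ρ (k' + 1) := by
    have h := tF_succ b ρ ρ1 (k' + 1)
    rw [show k' + 1 + 1 = k' + 2 from by omega, htk] at h
    linear_combination -h
  -- step A
  have hA : ∀ n, k' + 2 ≤ n →
      x (n + 1) - ∑ i ∈ Finset.range (k' + 2 + 1), a i • x (n - i)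
        = t (n + 1) + ∑ i ∈ Finset.range (k' + 2), peF a ρ i • t (n - i) := by
    intro n hn
    rw [expandM ρ (peF a ρ) x t n (k' + 2) (by omega) (by omega)
        (fun j hj => ht j (by omega)),
      ht (n + 1) (by omega), Finset.sum_range_succ']
    have hsplitA : (∑ i ∈ Finset.range (k' + 2), a (i + 1) • x (n - (i + 1)))
        = (∑ i ∈ Finset.range (k' + 1), a (i + 1) • x (n - (i + 1)))
          + a (k' + 2) • x (n - (k' + 2)) := by
      rw [show k' + 2 = k' + 1 + 1 from rfl, Finset.sum_range_succ]
    rw [hsplitA]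
    have hmid : (∑ i ∈ Finset.range (k' + 2 - 1),
          (peF a ρ (i + 1) - ρ * peF a ρ i) • x (n - 1 - i))
        = -∑ i ∈ Finset.range (k' + 1), a (i + 1) • x (n - (i + 1)) := by
      rw [← Finset.sum_neg_distrib, show k' + 2 - 1 = k' + 1 from by omega]
      refine Finset.sum_congr rfl fun i hi => ?_
      rw [peF_succ, show n - 1 - i = n - (i + 1) from by omega, ← neg_smul]
      congr 1
      ring
    rw [hmid, peF_zero, show k' + 2 - 1 = k' + 1 from by omega, hρpe]
    simp only [Nat.sub_zero, Nat.add_sub_cancel]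
    module
  -- step B
  have hB : ∀ n, k' + 2 ≤ n →
      ∑ i ∈ Finset.range (k' + 2 + 1), b i • x (n - i)
        = ∑ i ∈ Finset.range (k' + 2), qeF b ρ i • t (n - i) := by
    intro n hn
    rw [expandM ρ (qeF b ρ) x t n (k' + 2) (by omega) (by omega)
        (fun j hj => ht j (by omega)), Finset.sum_range_succ']
    have hsplitB : (∑ i ∈ Finset.range (k' + 2), b (i + 1) • x (n - (i + 1)))
        = (∑ i ∈ Finset.range (k' + 1), b (i + 1) • x (n - (i + 1)))
          + b (k' + 2) • x (n - (k' + 2)) := by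
      rw [show k' + 2 = k' + 1 + 1 from rfl, Finset.sum_range_succ]
    rw [hsplitB]
    have hmid : (∑ i ∈ Finset.range (k' + 2 - 1),
          (qeF b ρ (i + 1) - ρ * qeF b ρ i) • x (n - 1 - i))
        = ∑ i ∈ Finset.range (k' + 1), b (i + 1) • x (n - (i + 1)) := by
      rw [show k' + 2 - 1 = k' + 1 from by omega]
      refine Finset.sum_congr rfl fun i hi => ?_
      rw [qeF_succ, show n - 1 - i = n - (i + 1) from by omega]
      congr 1
      ring
    rw [hmid, qeF_zero, show k' + 2 - 1 = k' + 1 from by omega, hρqe]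
    simp only [Nat.sub_zero]
    module
  -- step C
  have hC : ∀ n, k' + 2 ≤ n →
      t (n + 1) + ∑ i ∈ Finset.range (k' + 2), peF a ρ i • t (n - i)
        = r (n + 1) + ∑ i ∈ Finset.range (k' + 1), p1 i • r (n - i) := by
    intro n hn
    have hsplit1 : (∑ i ∈ Finset.range (k' + 2), peF a ρ i • t (n - i))
        = (∑ i ∈ Finset.range (k' + 1), peF a ρ (i + 1) • t (n - (i + 1)))
          + peF a ρ 0 • t (n - 0) := by
      rw [show k' + 2 = k' + 1 + 1 from rfl, Finset.sum_range_succ']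
    have hsplit2 : (∑ i ∈ Finset.range (k' + 1), peF a ρ (i + 1) • t (n - (i + 1)))
        = (∑ i ∈ Finset.range k', peF a ρ (i + 1) • t (n - (i + 1)))
          + peF a ρ (k' + 1) • t (n - (k' + 1)) := by
      rw [Finset.sum_range_succ]
    rw [hsplit1, hsplit2, hr (n + 1) (by omega),
      expandM ρ1 p1 t r n (k' + 1) (by omega) (by omega) (fun j hj => hr j (by omega))]
    simp only [Nat.add_sub_cancel]
    have hmid : (∑ i ∈ Finset.range k', (p1 (i + 1) - ρ1 * p1 i) • t (n - 1 - i))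
        = ∑ i ∈ Finset.range k', peF a ρ (i + 1) • t (n - (i + 1)) := by
      refine Finset.sum_congr rfl fun i hi => ?_
      rw [Finset.mem_range] at hi
      rw [hp1e (i + 1) (by omega), hp1e i (by omega), sF_succ a ρ ρ1 (i + 1),
        show n - 1 - i = n - (i + 1) from by omega]
      congr 1
      ring
    have hp10 : p1 0 = ρ1 + peF a ρ 0 := by
      rw [hp1e 0 (by omega), sF_succ, sF_zero]
      ring
    have hlast : ρ1 * p1 k' = -peF a ρ (k' + 1) := by
      rw [hp1e k' (by omega)]
      exact hsl
    rw [hmid, hp10, hlast]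
    simp only [Nat.sub_zero]
    module
  -- step D
  have hD : ∀ n, k' + 2 ≤ n →
      ∑ i ∈ Finset.range (k' + 2), qeF b ρ i • t (n - i)
        = ∑ i ∈ Finset.range (k' + 1), q1 i • r (n - i) := by
    intro n hn
    have hsplit1 : (∑ i ∈ Finset.range (k' + 2), qeF b ρ i • t (n - i))
        = (∑ i ∈ Finset.range (k' + 1), qeF b ρ (i + 1) • t (n - (i + 1)))
          + qeF b ρ 0 • t (n - 0) := by
      rw [show k' + 2 = k' + 1 + 1 from rfl, Finset.sum_range_succ']
    have hsplit2 : (∑ i ∈ Finset.range (k' + 1), qeF b ρ (i + 1) • t (n - (i + 1)))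
        = (∑ i ∈ Finset.range k', qeF b ρ (i + 1) • t (n - (i + 1)))
          + qeF b ρ (k' + 1) • t (n - (k' + 1)) := by
      rw [Finset.sum_range_succ]
    rw [hsplit1, hsplit2,
      expandM ρ1 q1 t r n (k' + 1) (by omega) (by omega) (fun j hj => hr j (by omega))]
    simp only [Nat.add_sub_cancel]
    have hmid : (∑ i ∈ Finset.range k', (q1 (i + 1) - ρ1 * q1 i) • t (n - 1 - i))
        = ∑ i ∈ Finset.range k', qeF b ρ (i + 1) • t (n - (i + 1)) := by
      refine Finset.sum_congr rfl fun i hi => ?_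
      rw [Finset.mem_range] at hi
      rw [hq1e (i + 1) (by omega), hq1e i (by omega), tF_succ b ρ ρ1 (i + 1),
        show n - 1 - i = n - (i + 1) from by omega]
      congr 1
      ring
    have hq10 : q1 0 = qeF b ρ 0 := by
      rw [hq1e 0 (by omega), tF_succ, tF_zero]
      ring
    have hlast : ρ1 * q1 k' = -qeF b ρ (k' + 1) := by
      rw [hq1e k' (by omega)]
      exact htl
    rw [hmid, hq10, hlast]
    simp only [Nat.sub_zero]
    module
  -- conclusion
  constructor
  · intro H n hn
    have h2 : x (n + 1) - ∑ i ∈ Finset.range (k' + 2 + 1), a i • x (n - i)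
        = g n (∑ i ∈ Finset.range (k' + 2 + 1), b i • x (n - i)) := by
      rw [H n hn]
      abel
    rw [hA n hn, hC n hn, hB n hn, hD n hn] at h2
    rw [neg_add_eq_sub, eq_sub_iff_add_eq]
    exact h2
  · intro H n hn
    have h2 := H n hn
    rw [neg_add_eq_sub, eq_sub_iff_add_eq] at h2
    rw [← hD n hn, ← hB n hn, ← hC n hn, ← hA n hn] at h2
    rw [← h2]
    abel
end

section
/- Let R be an integral domain, M a unitary R-module, k ≥ 1 an integer, r ∈ R, and b_1, …, b_k ∈ R with b_k ≠ 0; set b_0 = 1 and b_{k+1} = 0. Suppose the polynomial X^{k} + b_1 X^{k−1} + ⋯ + b_k factors as ∏_{i=1}^{k} (X − ρ_i) where each ρ_i is a unit of R. Let g_n : M → M be maps for n ≥ 0. Then a sequence {x_n}_{n≥0} in M satisfies x_{n+1} = Σ_{j=0}^{k} (r b_j − b_{j+1}) x_{n−j} + g_n(Σ_{j=0}^{k} b_j x_{n−j}) for all n ≥ k if and only if the sequence y^{(k)}, obtained from y^{(0)} = x by the successive differences y^{(i)}_n = y^{(i−1)}_n − ρ_i y^{(i−1)}_{n−1} for i =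 1, …, k (and n ≥ i), satisfies the first-order recurrence y^{(k)}_{n+1} = r·y^{(k)}_n + g_n(y^{(k)}_n) for all n ≥ k. -/
open Polynomial

private noncomputable def paux {R : Type*} [CommRing R] (ρ : ℕ → R) (i : ℕ) : R[X] :=
  ∏ m ∈ Finset.Icc 1 i, (X - C (ρ m))

private noncomputable def caux {R : Type*} [CommRing R] (ρ : ℕ → R) (i j : ℕ) : R :=
  if j ≤ i then (paux ρ i).coeff (i - j) else 0

private theorem paux_monic {R : Type*} [CommRing R] (ρ : ℕ → R) (i : ℕ) :
    (paux ρ i).Monic :=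
  monic_prod_of_monic _ _ (fun m _ => monic_X_sub_C (ρ m))

private theorem paux_natDegree {R : Type*} [CommRing R] [Nontrivial R] (ρ : ℕ → R) (i : ℕ) :
    (paux ρ i).natDegree = i := by
  unfold paux
  rw [Polynomial.natDegree_prod_of_monic _ _ (fun m _ => monic_X_sub_C (ρ m))]
  simp [natDegree_X_sub_C]

private theorem paux_succ {R : Type*} [CommRing R] (ρ : ℕ → R) (i : ℕ) :
    paux ρ (i + 1) = paux ρ i * (X - C (ρ (i + 1))) :=
  Finset.prod_Icc_succ_top (Nat.le_add_left 1 i) _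

private theorem caux_zero {R : Type*} [CommRing R] [Nontrivial R] (ρ : ℕ → R) (i : ℕ) :
    caux ρ i 0 = 1 := by
  unfold caux
  rw [if_pos (Nat.zero_le i), Nat.sub_zero]
  have := (paux_monic ρ i).coeff_natDegree
  rwa [paux_natDegree ρ i] at this

private theorem caux_high {R : Type*} [CommRing R] (ρ : ℕ → R) (i j : ℕ) (h : i < j) :
    caux ρ i j = 0 := by
  unfold caux
  rw [if_neg (by omega)]

private theorem caux_rec {R : Type*} [CommRing R] [Nontrivial R] (ρ : ℕ → R) (i j : ℕ) :
    caux ρ (i + 1) (j + 1) = caux ρ i (j + 1) - ρ (i + 1) * caux ρ i j := by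
  have hcoeffhigh : ∀ m, i < m → (paux ρ i).coeff m = 0 := fun m h =>
    coeff_eq_zero_of_natDegree_lt (by rw [paux_natDegree]; exact h)
  have hmul : paux ρ (i + 1) = paux ρ i * X - C (ρ (i + 1)) * paux ρ i := by
    rw [paux_succ]; ring
  rcases lt_trichotomy j i with hji | hji | hji
  · -- j < i
    have h1 : caux ρ (i + 1) (j + 1) = (paux ρ (i + 1)).coeff (i - j) := by
      unfold caux; rw [if_pos (by omega)]; congr 1; omega
    rw [h1, hmul, coeff_sub, coeff_C_mul]
    have he : i - j = (i - (j + 1)) + 1 := by omega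
    rw [he, coeff_mul_X]
    have h2 : caux ρ i (j + 1) = (paux ρ i).coeff (i - (j + 1)) := by
      unfold caux; rw [if_pos (by omega)]
    have h3 : caux ρ i j = (paux ρ i).coeff (i - j) := by
      unfold caux; rw [if_pos (by omega)]
    rw [h2, h3, he]
  · -- j = i
    subst hji
    have h1 : caux ρ (j + 1) (j + 1) = (paux ρ (j + 1)).coeff 0 := by
      unfold caux; rw [if_pos le_rfl, Nat.sub_self]
    rw [h1, hmul, coeff_sub, coeff_C_mul, coeff_mul_X_zero]
    rw [caux_high ρ j (j + 1) (by omega)]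
    have h3 : caux ρ j j = (paux ρ j).coeff 0 := by
      unfold caux; rw [if_pos le_rfl, Nat.sub_self]
    rw [h3]
  · -- i < j
    rw [caux_high ρ (i + 1) (j + 1) (by omega), caux_high ρ i (j + 1) (by omega),
      caux_high ρ i j (by omega)]
    ring

theorem stmt11 {R M : Type*} [CommRing R] [IsDomain R] [AddCommGroup M] [Module R M]
    (k : ℕ) (hk : 1 ≤ k) (r : R) (b : ℕ → R)
    (hb0 : b 0 = 1) (hbk : b k ≠ 0) (hbk1 : b (k + 1) = 0)
    (ρ : ℕ → R) (hρ : ∀ i ∈ Finset.Icc 1 k, IsUnit (ρ i))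
    (hfac : (X ^ k + ∑ i ∈ Finset.Icc 1 k, C (b i) * X ^ (k - i) : R[X]) =
      ∏ i ∈ Finset.Icc 1 k, (X - C (ρ i)))
    (g : ℕ → M → M) (x : ℕ → M) (y : ℕ → ℕ → M)
    (hy0 : y 0 = x)
    (hys : ∀ i, 1 ≤ i → i ≤ k → ∀ n, i ≤ n →
      y i n = y (i - 1) n - ρ i • y (i - 1) (n - 1)) :
    (∀ n, k ≤ n →
      x (n + 1) = ∑ j ∈ Finset.range (k + 1), (r * b j - b (j + 1)) • x (n - j) +
        g n (∑ j ∈ Finset.range (k + 1), b j • x (n - j))) ↔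
    (∀ n, k ≤ n → y k (n + 1) = r • y k n + g n (y k n)) := by
  classical
  -- Step 1: y i n in terms of the coefficients of the partial products
  have hA : ∀ i, i ≤ k → ∀ n, i ≤ n →
      y i n = ∑ j ∈ Finset.range (i + 1), caux ρ i j • x (n - j) := by
    intro i
    induction i with
    | zero =>
      intro _ n _
      simp [hy0, caux_zero]
    | succ i ih =>
      intro hik n hin
      have hx1 : y (i + 1) n = y i n - ρ (i + 1) • y i (n - 1) := by
        have := hys (i + 1) (by omega) hik n hin
        simpa using this
      rw [hx1, ih (by omega) n (by omega), ih (by omega) (n - 1) (by omega)]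
      have hB : ρ (i + 1) • ∑ j ∈ Finset.range (i + 1), caux ρ i j • x (n - 1 - j)
          = ∑ j ∈ Finset.range (i + 1), (ρ (i + 1) * caux ρ i j) • x (n - (j + 1)) := by
        rw [Finset.smul_sum]
        refine Finset.sum_congr rfl fun j _ => ?_
        rw [smul_smul]
        congr 2
        omega
      rw [hB]
      have hA2 : ∑ j ∈ Finset.range (i + 1), caux ρ i (j + 1) • x (n - (j + 1))
          = (∑ j ∈ Finset.range (i + 1), caux ρ i j • x (n - j)) - x n := by
        have h1 : ∑ j ∈ Finset.range (i + 2), caux ρ i j • x (n - j)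
            = (∑ j ∈ Finset.range (i + 1), caux ρ i (j + 1) • x (n - (j + 1)))
              + caux ρ i 0 • x (n - 0) := Finset.sum_range_succ' _ _
        rw [Finset.sum_range_succ, caux_high ρ i (i + 1) (by omega), zero_smul, add_zero,
          caux_zero, one_smul, Nat.sub_zero] at h1
        exact eq_sub_of_add_eq h1.symm
      rw [Finset.sum_range_succ' (fun j => caux ρ (i + 1) j • x (n - j)) (i + 1)]
      simp only [caux_rec, caux_zero, one_smul, Nat.sub_zero, sub_smul,
        Finset.sum_sub_distrib]
      rw [hA2]
      abel
  -- Step 2: the coefficients are the b's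
  have hpk : paux ρ k = X ^ k + ∑ i ∈ Finset.Icc 1 k, C (b i) * X ^ (k - i) := hfac.symm
  have hcb : ∀ j, j ≤ k → caux ρ k j = b j := by
    intro j hj
    have h1 : caux ρ k j = (paux ρ k).coeff (k - j) := by
      unfold caux; rw [if_pos hj]
    rw [h1, hpk, coeff_add, coeff_X_pow, finset_sum_coeff]
    simp only [coeff_C_mul, coeff_X_pow]
    rcases Nat.eq_zero_or_pos j with rfl | hj1
    · rw [if_pos (by omega)]
      have hz : ∀ i ∈ Finset.Icc 1 k, b i * (if k - 0 = k - i then 1 else 0) = 0 := by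
        intro i hi
        simp only [Finset.mem_Icc] at hi
        rw [if_neg (by omega)]
        ring
      rw [Finset.sum_congr rfl hz, Finset.sum_const_zero, hb0, add_zero]
    · rw [if_neg (by omega)]
      rw [Finset.sum_eq_single j]
      · rw [if_pos rfl, mul_one, zero_add]
      · intro i hi hij
        simp only [Finset.mem_Icc] at hi
        rw [if_neg (by omega)]
        ring
      · intro h
        exact absurd (Finset.mem_Icc.mpr ⟨hj1, hj⟩) h
  have hS : ∀ n, k ≤ n → y k n = ∑ j ∈ Finset.range (k + 1), b j • x (n - j) := by
    intro n hn
    rw [hA k le_rfl n hn]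
    refine Finset.sum_congr rfl fun j hj => ?_
    exact congrArg (· • x (n - j)) (hcb j (Nat.lt_succ_iff.mp (Finset.mem_range.mp hj)))
  -- Step 3: rewrite the recurrence
  have key : ∀ n, k ≤ n →
      ((x (n + 1) = ∑ j ∈ Finset.range (k + 1), (r * b j - b (j + 1)) • x (n - j) +
          g n (∑ j ∈ Finset.range (k + 1), b j • x (n - j))) ↔
        (y k (n + 1) = r • y k n + g n (y k n))) := by
    intro n hn
    rw [hS n hn, hS (n + 1) (by omega)]
    set S := ∑ j ∈ Finset.range (k + 1), b j • x (n - j) with hSdef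
    set T := ∑ j ∈ Finset.range (k + 1), b (j + 1) • x (n - j) with hTdef
    have hT : ∑ j ∈ Finset.range (k + 1), b j • x (n + 1 - j) = x (n + 1) + T := by
      rw [Finset.sum_range_succ' (fun j => b j • x (n + 1 - j)) k]
      rw [hTdef, Finset.sum_range_succ (fun j => b (j + 1) • x (n - j)) k, hbk1, zero_smul,
        add_zero, hb0, one_smul, Nat.sub_zero, add_comm]
      congr 1
      refine Finset.sum_congr rfl fun j _ => ?_
      have hje : n + 1 - (j + 1) = n - j := by omega
      rw [hje]
    have hL : ∑ j ∈ Finset.range (k + 1), (r * b j - b (j + 1)) • x (n - j) = r • S - T := by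
      rw [hSdef, hTdef, Finset.smul_sum, ← Finset.sum_sub_distrib]
      refine Finset.sum_congr rfl fun j _ => ?_
      rw [sub_smul, mul_smul]
    rw [hT, hL]
    constructor
    · intro h
      rw [h]
      abel
    · intro h
      have h2 := eq_sub_of_add_eq h
      rw [h2]
      abel
  constructor
  · intro h n hn
    exact (key n hn).mp (h n hn)
  · intro h n hn
    exact (key n hn).mpr (h n hn)
end

section
/- Let R be an integral domain, M a unitary R-module, k ≥ 1 an integer, b ∈ R, and a_0, …, a_{k−1} ∈ R with a_{k−1} ≠ 0. Suppose the polynomial X^{k} − a_0 X^{k−1} − a_1 X^{k−2} − ⋯ − a_{k−1} factors as ∏_{i=1}^{k} (X − ρ_i) where each ρ_i is a unit of R. Let g_n : M → M be maps for n ≥ 0. Then a sequence {x_n}_{n≥0} in M satisfies x_{n+1} = Σ_{j=0}^{k−1} a_j x_{n−j} + g_n(b x_n − Σ_{j=1}^{k} a_{j−1} b x_{n−j}) for all n ≥ k if and only if the sequence y^{(k)}, obtained from y^{(0)} = x by the successive differences y^{(i)}_n = y^{(i−1)}_n − ρ_i y^{(i−1)}_{n−1} for i = 1, …, k (and n ≥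 i), satisfies the first-order recurrence y^{(k)}_{n+1} = g_n(b·y^{(k)}_n) for all n ≥ k. -/
open Polynomial

theorem stmt12 {R M : Type*} [CommRing R] [IsDomain R] [AddCommGroup M] [Module R M]
    (k : ℕ) (hk : 1 ≤ k) (b : R) (a : ℕ → R) (hak : a (k - 1) ≠ 0)
    (ρ : ℕ → R) (hρ : ∀ i ∈ Finset.Icc 1 k, IsUnit (ρ i))
    (hfac : (X ^ k - ∑ i ∈ Finset.range k, C (a i) * X ^ (k - 1 - i) : R[X]) =
      ∏ i ∈ Finset.Icc 1 k, (X - C (ρ i)))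
    (g : ℕ → M → M) (x : ℕ → M) (y : ℕ → ℕ → M)
    (hy0 : y 0 = x)
    (hys : ∀ i, 1 ≤ i → i ≤ k → ∀ n, i ≤ n →
      y i n = y (i - 1) n - ρ i • y (i - 1) (n - 1)) :
    (∀ n, k ≤ n →
      x (n + 1) = ∑ j ∈ Finset.range k, a j • x (n - j) +
        g n (b • x n - ∑ j ∈ Finset.Icc 1 k, (a (j - 1) * b) • x (n - j))) ↔
    (∀ n, k ≤ n → y k (n + 1) = g n (b • y k n)) := by
  -- Step 1: closed form for y i n via coefficients of the partial products
  have key : ∀ i, i ≤ k → ∀ n, i ≤ n →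
      y i n = ∑ m ∈ Finset.range (i+1),
        ((∏ j ∈ Finset.Icc 1 i, (X - C (ρ j))).coeff (i - m)) • x (n - m) := by
    intro i
    induction i with
    | zero => intro _ n _; simp [hy0]
    | succ i ih =>
      intro hik n hn
      have h1 : y (i+1) n = y i n - ρ (i+1) • y i (n-1) := by
        simpa using hys (i+1) (by omega) hik n (by omega)
      rw [h1, ih (by omega) n (by omega), ih (by omega) (n-1) (by omega)]
      set P : R[X] := ∏ j ∈ Finset.Icc 1 i, (X - C (ρ j)) with hP
      have hQ : ∏ j ∈ Finset.Icc 1 (i+1), (X - C (ρ j)) = P * (X - C (ρ (i+1))) := by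
        rw [Finset.prod_Icc_succ_top (by omega)]
      rw [hQ]
      set r := ρ (i+1) with hr
      have hPdeg : P.natDegree ≤ i := by
        refine le_trans (Polynomial.natDegree_prod_le _ _) ?_
        have h2 : ∑ j ∈ Finset.Icc 1 i, (X - C (ρ j)).natDegree = i := by
          simp [Polynomial.natDegree_X_sub_C]
        exact le_of_eq h2
      have hPtop : P.coeff (i+1) = 0 :=
        Polynomial.coeff_eq_zero_of_natDegree_lt (by omega)
      have hcoeff : ∀ d, (P * (X - C r)).coeff (d+1)
          = P.coeff d - r * P.coeff (d+1) := by
        intro d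
        rw [mul_sub, Polynomial.coeff_sub, Polynomial.coeff_mul_X,
          Polynomial.coeff_mul_C]
        ring
      have hcoeff0 : (P * (X - C r)).coeff 0 = -(r * P.coeff 0) := by
        rw [Polynomial.mul_coeff_zero]
        simp [mul_comm]
      have hterm : ∀ m ∈ Finset.range (i+1),
          ((P * (X - C r)).coeff (i+1-m)) • x (n - m)
          = P.coeff (i-m) • x (n-m) - (r * P.coeff (i+1-m)) • x (n-m) := by
        intro m hm
        simp only [Finset.mem_range] at hm
        have h2 : i + 1 - m = (i - m) + 1 := by omega
        have h3 : (i - m) + 1 = i + 1 - m := by omega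
        rw [h2, hcoeff, h3, sub_smul]
      have hS2 : ∑ m ∈ Finset.range (i+1), (r * P.coeff (i-m)) • x (n-1-m)
          = ∑ m ∈ Finset.range (i+1), (r * P.coeff (i+1-m)) • x (n-m)
            + (r * P.coeff 0) • x (n-(i+1)) := by
        have e1 := Finset.sum_range_succ
          (fun m => (r * P.coeff (i+1-m)) • x (n-m)) (i+1)
        have e2 := Finset.sum_range_succ'
          (fun m => (r * P.coeff (i+1-m)) • x (n-m)) (i+1)
        have e3 : ∑ m ∈ Finset.range (i+1), (r * P.coeff (i+1-(m+1))) • x (n-(m+1))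
            = ∑ m ∈ Finset.range (i+1), (r * P.coeff (i-m)) • x (n-1-m) := by
          refine Finset.sum_congr rfl fun m hm => ?_
          have h4 : i + 1 - (m+1) = i - m := by omega
          have h5 : n - (m+1) = n - 1 - m := by omega
          rw [h4, h5]
        rw [e3] at e2
        have e4 : ∑ m ∈ Finset.range (i+1), (r * P.coeff (i-m)) • x (n-1-m)
            + (r * P.coeff (i+1)) • x (n-0)
            = ∑ m ∈ Finset.range (i+1), (r * P.coeff (i+1-m)) • x (n-m)
            + (r * P.coeff 0) • x (n-(i+1)) := by
          simp only [Nat.sub_zero, Nat.sub_self] at e1 e2 ⊢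
          rw [← e2, e1]
        simpa [hPtop] using e4
      symm
      calc ∑ m ∈ Finset.range (i+1+1), ((P * (X - C r)).coeff (i+1-m)) • x (n-m)
          = (∑ m ∈ Finset.range (i+1), ((P * (X - C r)).coeff (i+1-m)) • x (n-m))
            + ((P * (X - C r)).coeff 0) • x (n-(i+1)) := by
            rw [Finset.sum_range_succ]
            have h6 : i + 1 - (i+1) = 0 := by omega
            rw [h6]
        _ = (∑ m ∈ Finset.range (i+1),
              (P.coeff (i-m) • x (n-m) - (r * P.coeff (i+1-m)) • x (n-m)))
            + (-(r * P.coeff 0)) • x (n-(i+1)) := by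
            rw [Finset.sum_congr rfl hterm, hcoeff0]
        _ = ∑ m ∈ Finset.range (i+1), P.coeff (i-m) • x (n-m)
            - (∑ m ∈ Finset.range (i+1), (r * P.coeff (i+1-m)) • x (n-m)
               + (r * P.coeff 0) • x (n-(i+1))) := by
            rw [Finset.sum_sub_distrib, neg_smul]
            abel
        _ = ∑ m ∈ Finset.range (i+1), P.coeff (i-m) • x (n-m)
            - ∑ m ∈ Finset.range (i+1), (r * P.coeff (i-m)) • x (n-1-m) := by
            rw [← hS2]
        _ = ∑ m ∈ Finset.range (i+1), P.coeff (i-m) • x (n-m)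
            - r • ∑ m ∈ Finset.range (i+1), P.coeff (i-m) • x (n-1-m) := by
            rw [Finset.smul_sum]
            simp_rw [smul_smul]
  -- Step 2: coefficients of the characteristic polynomial
  have hc : ∀ m, m ≤ k →
      (X ^ k - ∑ i ∈ Finset.range k, C (a i) * X ^ (k - 1 - i) : R[X]).coeff (k-m)
      = if m = 0 then 1 else -(a (m-1)) := by
    intro m hm
    rw [Polynomial.coeff_sub, Polynomial.coeff_X_pow, Polynomial.finset_sum_coeff]
    have hsum : ∑ i ∈ Finset.range k, (C (a i) * X ^ (k-1-i)).coeff (k-m)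
        = if m = 0 then 0 else a (m-1) := by
      rcases Nat.eq_zero_or_pos m with hm0 | hm0
      · subst hm0
        rw [if_pos rfl, Finset.sum_eq_zero]
        intro i hi
        simp only [Finset.mem_range] at hi
        rw [Polynomial.coeff_C_mul, Polynomial.coeff_X_pow, if_neg (by omega), mul_zero]
      · rw [if_neg (by omega), Finset.sum_eq_single (m-1)]
        · rw [Polynomial.coeff_C_mul, Polynomial.coeff_X_pow, if_pos (by omega), mul_one]
        · intro i hi hne
          simp only [Finset.mem_range] at hi
          rw [Polynomial.coeff_C_mul, Polynomial.coeff_X_pow, if_neg (by omega), mul_zero]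
        · intro h
          exact absurd (Finset.mem_range.mpr (by omega)) h
    rw [hsum]
    rcases Nat.eq_zero_or_pos m with hm0 | hm0
    · subst hm0
      rw [if_pos rfl, if_pos rfl, if_pos (by omega), sub_zero]
    · rw [if_neg (by omega), if_neg (by omega), if_neg (by omega), zero_sub]
  -- Step 3: closed form for y k
  have hyk : ∀ n, k ≤ n →
      y k n = x n - ∑ j ∈ Finset.range k, a j • x (n - (j+1)) := by
    intro n hn
    rw [key k le_rfl n hn, ← hfac]
    rw [Finset.sum_range_succ']
    have e1 : ∀ m ∈ Finset.range k,
        ((X ^ k - ∑ i ∈ Finset.range k, C (a i) * X ^ (k - 1 - i) : R[X]).coeff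
          (k-(m+1))) • x (n-(m+1)) = -(a m • x (n-(m+1))) := by
      intro m hm
      simp only [Finset.mem_range] at hm
      rw [hc (m+1) (by omega)]
      simp [neg_smul]
    rw [Finset.sum_congr rfl e1, hc 0 (by omega)]
    rw [if_pos rfl]
    simp only [Nat.sub_zero, one_smul]
    rw [Finset.sum_neg_distrib]
    abel
  -- Step 4: conclude
  have hmain : ∀ n, k ≤ n →
      (y k (n+1) = x (n+1) - ∑ j ∈ Finset.range k, a j • x (n - j)) := by
    intro n hn
    rw [hyk (n+1) (by omega)]
    congr 1
    refine Finset.sum_congr rfl fun j hj => ?_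
    simp only [Finset.mem_range] at hj
    have : n + 1 - (j+1) = n - j := by omega
    rw [this]
  have hmain2 : ∀ n, k ≤ n →
      b • y k n = b • x n - ∑ j ∈ Finset.Icc 1 k, (a (j-1) * b) • x (n - j) := by
    intro n hn
    rw [hyk n hn, smul_sub, Finset.smul_sum]
    congr 1
    rw [show Finset.Icc 1 k = Finset.Ico 1 (k+1) from (Finset.Ico_add_one_right_eq_Icc 1 k).symm,
      Finset.sum_Ico_eq_sum_range]
    simp only [Nat.add_sub_cancel]
    refine Finset.sum_congr rfl fun m hm => ?_
    rw [smul_smul]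
    have h1 : 1 + m - 1 = m := by omega
    have h2 : n - (m+1) = n - (1+m) := by omega
    rw [h1, h2, mul_comm]
  constructor
  · intro H n hn
    rw [hmain n hn, hmain2 n hn, H n hn]
    abel
  · intro H n hn
    have h := H n hn
    rw [hmain n hn, hmain2 n hn] at h
    have h' := sub_eq_iff_eq_add.mp h
    rw [h']
    abel
end

section
/- Let F be a field, k ≥ 0 an integer, a_0, …, a_k ∈ F with a_k ≠ 0, and c_n ∈ F for n ≥ 0. Suppose the polynomial λ^{k+1} − Σ_{i=0}^{k} a_i λ^{k−i} factors completely over F as ∏_{i=1}^{k+1} (λ − ρ_i) with ρ_1, …, ρ_{k+1} ∈ F. Then a sequence {x_n}_{n≥0} in F satisfies the linear non-homogeneous recurrence x_{n+1} = Σ_{i=0}^{k} a_i x_{n−i} + c_n for all n ≥ k if and only if the sequence y^{(k)}, obtained from y^{(0)} = x by the successive differences y^{(i)}_n = y^{(i−1)}_n − ρ_i y^{(i−1)}_{n−1} for i = 1, …, k (and n ≥ i), satisfies the first-order linear non-homogeneous recurrence y^{(k)}_{n+1} = ρ_{k+1} y^{(k)}_n + c_n for all n ≥ k. -/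
open Polynomial Finset

private lemma stmt13_deg_le {F : Type*} [Field F] (ρ : ℕ → F) (i : ℕ) :
    (∏ m ∈ Finset.Icc 1 i, (X - C (ρ m))).natDegree ≤ i := by
  refine le_trans (Polynomial.natDegree_prod_le _ _) ?_
  simp [natDegree_X_sub_C]

private lemma stmt13_shift {F : Type*} [Field F] (k : ℕ) (x : ℕ → F)
    (P : F[X]) (hP : P.natDegree ≤ k) (r : F) (b : ℕ) :
    (∑ j ∈ range (k + 2), P.coeff j * x (b + j + 1)) -
      r * ∑ j ∈ range (k + 2), P.coeff j * x (b + j) =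
    ∑ j ∈ range (k + 2), ((X - C r) * P).coeff j * x (b + j) := by
  have hPk : P.coeff (k + 1) = 0 :=
    coeff_eq_zero_of_natDegree_lt (by omega)
  have h1 : ∑ j ∈ range (k + 2), (X * P).coeff j * x (b + j)
      = ∑ j ∈ range (k + 2), P.coeff j * x (b + j + 1) := by
    have e1 := Finset.sum_range_succ' (fun j => (X * P).coeff j * x (b + j)) (k + 1)
    have e2 := Finset.sum_range_succ (fun j => P.coeff j * x (b + j + 1)) (k + 1)
    rw [e1, e2]
    simp [coeff_X_mul, hPk, add_assoc, mul_coeff_zero]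
  have h2 : ∀ j, ((X - C r) * P).coeff j = (X * P).coeff j - r * P.coeff j := by
    intro j; rw [sub_mul, coeff_sub, coeff_C_mul]
  simp only [h2]
  simp only [sub_mul]
  rw [Finset.sum_sub_distrib, h1, Finset.mul_sum]
  simp [mul_assoc]

private lemma stmt13_yform {F : Type*} [Field F] (k : ℕ) (ρ : ℕ → F) (x : ℕ → F)
    (y : ℕ → ℕ → F) (hy0 : y 0 = x)
    (hys : ∀ i, 1 ≤ i → i ≤ k → ∀ n, i ≤ n →
      y i n = y (i - 1) n - ρ i * y (i - 1) (n - 1)) :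
    ∀ i, i ≤ k → ∀ n, i ≤ n →
      y i n = ∑ j ∈ range (k + 2),
        (∏ m ∈ Finset.Icc 1 i, (X - C (ρ m))).coeff j * x (n - i + j) := by
  intro i
  induction i with
  | zero =>
      intro _ n _
      simp [hy0, coeff_one]
  | succ i ih =>
      intro hik n hn
      rw [hys (i + 1) (by omega) hik n hn]
      simp only [Nat.add_sub_cancel]
      rw [ih (by omega) n (by omega), ih (by omega) (n - 1) (by omega)]
      have e1 : ∀ j : ℕ, n - i + j = n - (i + 1) + j + 1 := by intro j; omega
      have e2 : ∀ j : ℕ, n - 1 - i + j = n - (i + 1) + j := by intro j; omega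
      have s1 : (∑ j ∈ range (k + 2),
            (∏ m ∈ Finset.Icc 1 i, (X - C (ρ m))).coeff j * x (n - i + j))
          = ∑ j ∈ range (k + 2),
            (∏ m ∈ Finset.Icc 1 i, (X - C (ρ m))).coeff j * x (n - (i + 1) + j + 1) :=
        Finset.sum_congr rfl (fun j _ => by rw [e1 j])
      have s2 : (∑ j ∈ range (k + 2),
            (∏ m ∈ Finset.Icc 1 i, (X - C (ρ m))).coeff j * x (n - 1 - i + j))
          = ∑ j ∈ range (k + 2),
            (∏ m ∈ Finset.Icc 1 i, (X - C (ρ m))).coeff j * x (n - (i + 1) + j) :=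
        Finset.sum_congr rfl (fun j _ => by rw [e2 j])
      rw [s1, s2]
      calc (∑ j ∈ range (k + 2),
              (∏ m ∈ Finset.Icc 1 i, (X - C (ρ m))).coeff j * x (n - (i + 1) + j + 1)) -
            ρ (i + 1) * ∑ j ∈ range (k + 2),
              (∏ m ∈ Finset.Icc 1 i, (X - C (ρ m))).coeff j * x (n - (i + 1) + j)
          = ∑ j ∈ range (k + 2),
              ((X - C (ρ (i + 1))) * ∏ m ∈ Finset.Icc 1 i, (X - C (ρ m))).coeff j *
                x (n - (i + 1) + j) :=
            stmt13_shift k x _ (le_trans (stmt13_deg_le ρ i) (by omega)) _ _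
        _ = ∑ j ∈ range (k + 2),
              (∏ m ∈ Finset.Icc 1 (i + 1), (X - C (ρ m))).coeff j *
                x (n - (i + 1) + j) := by
            rw [Finset.prod_Icc_succ_top (by omega) (fun m => (X : F[X]) - C (ρ m)),
                mul_comm]

theorem stmt13 {F : Type*} [Field F] (k : ℕ) (a : ℕ → F) (hak : a k ≠ 0)
    (c : ℕ → F) (ρ : ℕ → F)
    (hfac : (X ^ (k + 1) - ∑ i ∈ Finset.range (k + 1), C (a i) * X ^ (k - i) : F[X]) =
      ∏ i ∈ Finset.Icc 1 (k + 1), (X - C (ρ i)))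
    (x : ℕ → F) (y : ℕ → ℕ → F)
    (hy0 : y 0 = x)
    (hys : ∀ i, 1 ≤ i → i ≤ k → ∀ n, i ≤ n →
      y i n = y (i - 1) n - ρ i * y (i - 1) (n - 1)) :
    (∀ n, k ≤ n →
      x (n + 1) = ∑ i ∈ Finset.range (k + 1), a i * x (n - i) + c n) ↔
    (∀ n, k ≤ n → y k (n + 1) = ρ (k + 1) * y k n + c n) := by
  have key : ∀ n, k ≤ n → y k (n + 1) - ρ (k + 1) * y k n
      = x (n + 1) - ∑ i ∈ Finset.range (k + 1), a i * x (n - i) := by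
    intro n hn
    have hf := stmt13_yform k ρ x y hy0 hys k le_rfl
    rw [hf (n + 1) (by omega), hf n (by omega)]
    have e1 : ∀ j : ℕ, n + 1 - k + j = n - k + j + 1 := by intro j; omega
    have step : (∑ j ∈ range (k + 2),
          (∏ m ∈ Finset.Icc 1 k, (X - C (ρ m))).coeff j * x (n + 1 - k + j)) -
        ρ (k + 1) * ∑ j ∈ range (k + 2),
          (∏ m ∈ Finset.Icc 1 k, (X - C (ρ m))).coeff j * x (n - k + j)
        = ∑ j ∈ range (k + 2),
            ((X - C (ρ (k + 1))) * ∏ m ∈ Finset.Icc 1 k, (X - C (ρ m))).coeff j *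
              x (n - k + j) := by
      rw [Finset.sum_congr rfl (fun j _ => by rw [e1 j])]
      exact stmt13_shift k x _ (stmt13_deg_le ρ k) _ _
    rw [step]
    have hQ : (X - C (ρ (k + 1))) * ∏ m ∈ Finset.Icc 1 k, (X - C (ρ m))
        = (X ^ (k + 1) - ∑ i ∈ Finset.range (k + 1), C (a i) * X ^ (k - i) : F[X]) := by
      rw [hfac, Finset.prod_Icc_succ_top (by omega) (fun m => (X : F[X]) - C (ρ m)),
          mul_comm]
    rw [hQ]
    have hsplit : ∀ j : ℕ,
        ((X ^ (k + 1) - ∑ i ∈ Finset.range (k + 1), C (a i) * X ^ (k - i) : F[X])).coeff j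
        = (X ^ (k + 1) : F[X]).coeff j
          - ∑ i ∈ Finset.range (k + 1), (C (a i) * X ^ (k - i) : F[X]).coeff j := by
      intro j; rw [coeff_sub, Polynomial.finset_sum_coeff]
    simp only [hsplit, sub_mul, Finset.sum_mul]
    rw [Finset.sum_sub_distrib]
    have hA : ∑ j ∈ range (k + 2), (X ^ (k + 1) : F[X]).coeff j * x (n - k + j)
        = x (n + 1) := by
      rw [Finset.sum_eq_single (k + 1)]
      · have : n - k + (k + 1) = n + 1 := by omega
        simp [coeff_X_pow, this]
      · intro j _ hj; simp [coeff_X_pow, hj]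
      · intro h; exact absurd (self_mem_range_succ (k + 1)) h
    have hB : ∑ j ∈ range (k + 2), (∑ i ∈ Finset.range (k + 1),
          (C (a i) * X ^ (k - i) : F[X]).coeff j * x (n - k + j))
        = ∑ i ∈ Finset.range (k + 1), a i * x (n - i) := by
      rw [Finset.sum_comm]
      refine Finset.sum_congr rfl (fun i hi => ?_)
      have hik : i ≤ k := by simpa [Nat.lt_succ_iff] using hi
      rw [Finset.sum_eq_single (k - i)]
      · have : n - k + (k - i) = n - i := by omega
        simp [coeff_C_mul, coeff_X_pow, this]
      · intro j _ hj; simp [coeff_C_mul, coeff_X_pow, hj]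
      · intro h; exact absurd (Finset.mem_range.mpr (by omega)) h
    rw [hA, hB]
  constructor
  · intro h n hn
    linear_combination key n hn + h n hn
  · intro h n hn
    linear_combination h n hn - key n hn
end

section
/- Let R be a commutative ring with identity, k ≥ 1 an integer, 0 ≤ j ≤ k−1 a fixed integer, a_0, …, a_k ∈ R and b ∈ R. Then the following are equivalent: (i) there exists a sequence {α_n}_{n≥0} of units of R satisfying, for every n ≥ k, both Σ_{i=0}^{k} a_i (α_{n−1}α_{n−2}⋯α_{n−i})^{−1} = α_n (with the empty product for i = 0 interpreted as 1) and (α_{n−1}⋯α_{n−j})^{−1} − b·(α_{n−1}⋯α_{n−j−1})^{−1} = 0; (ii) b is a unit of R and b is a root of P(λ) = λ^{k+1} − Σ_{i=0}^{k} a_i λ^{k−i}, i.e. b^{k+1} = Σ_{i=0}^{k} a_i b^{k−i}. In other words, the recurrence x_{n+1} = Σ_{i=0}^{k} a_i x_{n−i} + g_n(x_{n−j} − b x_{n−j−1}) is reducible relative to the linear form symmetry if and only if b is a unit root of P in R. -/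
private lemma pow_mul_inv_pow {R : Type*} [CommRing R] (u : Rˣ) {i k : ℕ} (hi : i ≤ k) :
    (u : R) ^ k * ((u⁻¹ : Rˣ) : R) ^ i = (u : R) ^ (k - i) := by
  have h1 : (u : R) ^ k = (u : R) ^ (k - i) * (u : R) ^ i := by
    rw [← pow_add, Nat.sub_add_cancel hi]
  have h2 : (u : R) ^ i * ((u⁻¹ : Rˣ) : R) ^ i = 1 := by
    rw [← mul_pow, Units.mul_inv, one_pow]
  rw [h1, mul_assoc, h2, mul_one]

theorem stmt14 {R : Type*} [CommRing R] (k j : ℕ) (hk : 1 ≤ k) (hj : j ≤ k - 1)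
    (a : ℕ → R) (b : R) :
    (∃ α : ℕ → Rˣ, ∀ n, k ≤ n →
      (∑ i ∈ Finset.range (k + 1),
          a i * (((∏ l ∈ Finset.Icc 1 i, α (n - l))⁻¹ : Rˣ) : R) = (α n : R)) ∧
      ((((∏ l ∈ Finset.Icc 1 j, α (n - l))⁻¹ : Rˣ) : R) -
        b * (((∏ l ∈ Finset.Icc 1 (j + 1), α (n - l))⁻¹ : Rˣ) : R) = 0)) ↔
    (IsUnit b ∧ b ^ (k + 1) = ∑ i ∈ Finset.range (k + 1), a i * b ^ (k - i)) := by
  have hjk : j + 1 ≤ k := by omega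
  constructor
  · rintro ⟨α, hα⟩
    -- Step 1: the second equation forces α m = b for all m ≥ k - (j+1)
    have key : ∀ m, k - (j + 1) ≤ m → (α m : R) = b := by
      intro m hm
      set n := m + (j + 1) with hn
      have hnk : k ≤ n := by omega
      obtain ⟨-, h2⟩ := hα n hnk
      have hP : (∏ l ∈ Finset.Icc 1 (j + 1), α (n - l)) =
          (∏ l ∈ Finset.Icc 1 j, α (n - l)) * α (n - (j + 1)) := by
        rw [Finset.prod_Icc_succ_top (by omega)]
      have hm' : n - (j + 1) = m := by omega
      set P := ∏ l ∈ Finset.Icc 1 j, α (n - l) with hPdef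
      rw [hP, hm', sub_eq_zero] at h2
      -- h2 : (P⁻¹ : R) = b * ((P * α m)⁻¹ : R)
      have : b = (α m : R) := by
        calc b = b * (((P * α m)⁻¹ : Rˣ) : R) * ((P * α m : Rˣ) : R) := by
              rw [mul_assoc, ← Units.val_mul, inv_mul_cancel, Units.val_one, mul_one]
          _ = ((P⁻¹ : Rˣ) : R) * ((P * α m : Rˣ) : R) := by rw [← h2]
          _ = ((P⁻¹ * (P * α m) : Rˣ) : R) := by simp
          _ = (α m : R) := by rw [← mul_assoc, inv_mul_cancel, one_mul]
      exact this.symm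
    -- Step 2: b is a unit
    have hbu : IsUnit b := by
      have := key k (by omega)
      exact this ▸ (α k).isUnit
    refine ⟨hbu, ?_⟩
    -- Step 3: use the first equation at n = 2k
    set u : Rˣ := α k with hu
    have hub : (u : R) = b := key k (by omega)
    obtain ⟨h1, -⟩ := hα (2 * k) (by omega)
    have hall : ∀ l ∈ Finset.Icc 1 k, α (2 * k - l) = u := by
      intro l hl
      simp only [Finset.mem_Icc] at hl
      apply Units.ext
      rw [hub]
      exact key (2 * k - l) (by omega)
    have h2k : (α (2 * k) : R) = b := key (2 * k) (by omega)
    rw [h2k] at h1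
    have h1' : ∑ i ∈ Finset.range (k + 1), a i * ((u⁻¹ : Rˣ) : R) ^ i = b := by
      rw [← h1]
      apply Finset.sum_congr rfl
      intro i hi
      simp only [Finset.mem_range] at hi
      congr 1
      have : (∏ l ∈ Finset.Icc 1 i, α (2 * k - l)) = u ^ i := by
        rw [Finset.prod_congr rfl (fun l hl => hall l (Finset.mem_Icc.mpr
          (by simp only [Finset.mem_Icc] at hl; omega))), Finset.prod_const,
          Nat.card_Icc]
        simp
      rw [this, ← inv_pow, Units.val_pow_eq_pow_val]
    calc b ^ (k + 1) = b ^ k * b := by ring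
      _ = b ^ k * ∑ i ∈ Finset.range (k + 1), a i * ((u⁻¹ : Rˣ) : R) ^ i := by rw [h1']
      _ = ∑ i ∈ Finset.range (k + 1), a i * ((u : R) ^ k * ((u⁻¹ : Rˣ) : R) ^ i) := by
          rw [Finset.mul_sum]; apply Finset.sum_congr rfl; intro i _; rw [hub]; ring
      _ = ∑ i ∈ Finset.range (k + 1), a i * b ^ (k - i) := by
          apply Finset.sum_congr rfl
          intro i hi
          simp only [Finset.mem_range] at hi
          rw [pow_mul_inv_pow u (by omega), hub]
  · rintro ⟨hbu, heq⟩
    set u : Rˣ := hbu.unit with hudef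
    have hub : (u : R) = b := hbu.unit_spec
    refine ⟨fun _ => u, fun n hn => ?_⟩
    have hprod : ∀ i : ℕ, ((((∏ _l ∈ Finset.Icc 1 i, u)⁻¹ : Rˣ)) : R)
        = ((u⁻¹ : Rˣ) : R) ^ i := by
      intro i
      rw [Finset.prod_const, Nat.card_Icc]
      simp [← inv_pow, Units.val_pow_eq_pow_val]
    constructor
    · simp only [hprod]
      have := congrArg (fun x => x * ((u⁻¹ : Rˣ) : R) ^ k) heq
      simp only [Finset.sum_mul] at this
      rw [← hub] at this
      have hL : (u : R) ^ (k + 1) * ((u⁻¹ : Rˣ) : R) ^ k = (u : R) := by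
        have := pow_mul_inv_pow u (k := k + 1) (i := k) (by omega)
        simpa using this
      rw [hL] at this
      rw [this]
      apply Finset.sum_congr rfl
      intro i hi
      simp only [Finset.mem_range] at hi
      rw [mul_assoc]
      congr 1
      -- (u⁻¹)^i = u^(k-i) * (u⁻¹)^k
      have h3 : ((u⁻¹ : Rˣ) : R) ^ k = ((u⁻¹ : Rˣ) : R) ^ (k - i) * ((u⁻¹ : Rˣ) : R) ^ i := by
        rw [← pow_add, Nat.sub_add_cancel (by omega)]
      rw [h3, ← mul_assoc, ← mul_pow, Units.mul_inv, one_pow, one_mul]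
    · simp only [hprod]
      rw [pow_succ', ← mul_assoc, ← hub, Units.mul_inv, one_mul, sub_self]
end

section
/- Let R be a commutative ring with identity, k ≥ 1 an integer, 0 ≤ j ≤ k−1 a fixed integer, and a_0, …, a_k ∈ R. Then there exists a sequence {α_n}_{n≥0} of units of R satisfying, for every n ≥ k, both Σ_{i=0}^{k} a_i (α_{n−1}α_{n−2}⋯α_{n−i})^{−1} = α_n (with the empty product for i = 0 interpreted as 1) and (α_{n−1}⋯α_{n−j})^{−1} − (α_{n−1}⋯α_{n−j−1})^{−1} = 0, if and only if Σ_{i=0}^{k} a_i = 1. In other words, the recurrence x_{n+1} = Σ_{i=0}^{k} a_i x_{n−i} + g_n(x_{n−j} − x_{n−j−1}) is reducible relative to the linear form symmetry if and only if Σ_{i=0}^{k} a_i = 1. -/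
theorem stmt15 {R : Type*} [CommRing R] (k j : ℕ) (hk : 1 ≤ k) (hj : j ≤ k - 1)
    (a : ℕ → R) :
    (∃ α : ℕ → Rˣ, ∀ n, k ≤ n →
      (∑ i ∈ Finset.range (k + 1),
          a i * (((∏ l ∈ Finset.Icc 1 i, α (n - l))⁻¹ : Rˣ) : R) = (α n : R)) ∧
      ((((∏ l ∈ Finset.Icc 1 j, α (n - l))⁻¹ : Rˣ) : R) -
        (((∏ l ∈ Finset.Icc 1 (j + 1), α (n - l))⁻¹ : Rˣ) : R) = 0)) ↔
    ∑ i ∈ Finset.range (k + 1), a i = 1 := by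
  constructor
  · rintro ⟨α, hα⟩
    -- first show α m = 1 for all m ≥ k
    have hone : ∀ m, k ≤ m → α m = 1 := by
      intro m hm
      have hn : k ≤ m + j + 1 := by omega
      have h2 := (hα (m + j + 1) hn).2
      have hcast : ((∏ l ∈ Finset.Icc 1 j, α (m + j + 1 - l))⁻¹ : Rˣ)
          = ((∏ l ∈ Finset.Icc 1 (j + 1), α (m + j + 1 - l))⁻¹ : Rˣ) :=
        Units.ext (sub_eq_zero.mp h2)
      have hprod : (∏ l ∈ Finset.Icc 1 j, α (m + j + 1 - l))
          = ∏ l ∈ Finset.Icc 1 (j + 1), α (m + j + 1 - l) := by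
        simpa using congrArg (·⁻¹) hcast
      have hins : ∏ l ∈ Finset.Icc 1 (j + 1), α (m + j + 1 - l)
          = (∏ l ∈ Finset.Icc 1 j, α (m + j + 1 - l)) * α (m + j + 1 - (j + 1)) :=
        Finset.prod_Icc_succ_top (by omega) _
      have : α (m + j + 1 - (j + 1)) = 1 := by
        rw [hins] at hprod
        have h' : (∏ l ∈ Finset.Icc 1 j, α (m + j + 1 - l)) * 1
            = (∏ l ∈ Finset.Icc 1 j, α (m + j + 1 - l)) * α (m + j + 1 - (j + 1)) := by
          rw [mul_one]; exact hprod
        exact (mul_left_cancel h').symm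
      simpa using this
    have h1 := (hα (2 * k) (by omega)).1
    have hα2k : α (2 * k) = 1 := hone _ (by omega)
    have hprod1 : ∀ i ∈ Finset.range (k + 1),
        a i * (((∏ l ∈ Finset.Icc 1 i, α (2 * k - l))⁻¹ : Rˣ) : R) = a i := by
      intro i hi
      simp only [Finset.mem_range] at hi
      have : (∏ l ∈ Finset.Icc 1 i, α (2 * k - l)) = 1 := by
        apply Finset.prod_eq_one
        intro l hl
        simp only [Finset.mem_Icc] at hl
        exact hone _ (by omega)
      rw [this]; simp
    rw [Finset.sum_congr rfl hprod1] at h1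
    rw [h1, hα2k, Units.val_one]
  · intro hsum
    refine ⟨fun _ => 1, fun n hn => ⟨?_, ?_⟩⟩
    · simp [hsum]
    · simp
end

section
/- Let R be a commutative ring with identity, k ≥ 1 an integer, 0 ≤ j ≤ k−1 a fixed integer, and a_0, …, a_k ∈ R. Then there exists a sequence {α_n}_{n≥0} of units of R satisfying, for every n ≥ k, both Σ_{i=0}^{k} a_i (α_{n−1}α_{n−2}⋯α_{n−i})^{−1} = α_n (with the empty product for i = 0 interpreted as 1) and (α_{n−1}⋯α_{n−j})^{−1} + (α_{n−1}⋯α_{n−j−1})^{−1} = 0, if and only if Σ_{i=0}^{k} (−1)^{k−i} a_i = (−1)^{k+1}. In other words, the recurrence x_{n+1} = Σ_{i=0}^{k} a_i x_{n−i} + g_n(x_{n−j} + x_{n−j−1}) is reducible relative to the linear form symmetry if and only if Σ_{i=0}^{k} (−1)^{k−i} a_i = (−1)^{k+1}. -/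
theorem stmt16 {R : Type*} [CommRing R] (k j : ℕ) (hk : 1 ≤ k) (hj : j ≤ k - 1)
    (a : ℕ → R) :
    (∃ α : ℕ → Rˣ, ∀ n, k ≤ n →
      (∑ i ∈ Finset.range (k + 1),
          a i * (((∏ l ∈ Finset.Icc 1 i, α (n - l))⁻¹ : Rˣ) : R) = (α n : R)) ∧
      ((((∏ l ∈ Finset.Icc 1 j, α (n - l))⁻¹ : Rˣ) : R) +
        (((∏ l ∈ Finset.Icc 1 (j + 1), α (n - l))⁻¹ : Rˣ) : R) = 0)) ↔
    ∑ i ∈ Finset.range (k + 1), (-1 : R) ^ (k - i) * a i = (-1 : R) ^ (k + 1) := by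
  have key : ∀ i : ℕ, (((∏ l ∈ Finset.Icc 1 i, (-1 : Rˣ))⁻¹ : Rˣ) : R) = (-1) ^ i := by
    intro i
    rw [Finset.prod_const, Nat.card_Icc, Nat.add_sub_cancel, ← inv_pow, inv_neg_one,
      Units.val_pow_eq_pow_val, Units.val_neg, Units.val_one]
  have hsum : ∑ i ∈ Finset.range (k+1), (-1:R)^(k-i) * a i
      = (-1)^k * ∑ i ∈ Finset.range (k+1), a i * (-1)^i := by
    rw [Finset.mul_sum]
    refine Finset.sum_congr rfl fun i hi => ?_
    have hik : i ≤ k := Nat.lt_succ_iff.mp (Finset.mem_range.mp hi)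
    have h1 : (-1:R)^(k-i) * (-1)^i = (-1)^k := by
      rw [← pow_add, Nat.sub_add_cancel hik]
    have h2 : (-1:R)^i * (-1)^i = 1 := by
      rw [← pow_add, ← two_mul, pow_mul, neg_one_sq, one_pow]
    calc (-1:R)^(k-i) * a i = ((-1)^(k-i) * (-1)^i) * ((-1)^i * a i) := by
          rw [mul_assoc, ← mul_assoc ((-1:R)^i), h2, one_mul]
      _ = (-1)^k * (a i * (-1)^i) := by rw [h1, mul_comm (a i)]
  have hkk : ((-1:R)^k) * ((-1)^k) = 1 := by
    rw [← pow_add, ← two_mul, pow_mul, neg_one_sq, one_pow]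
  have hodd : ((-1:R)^k) * ((-1)^(k+1)) = -1 := by
    rw [← pow_add]
    exact Odd.neg_one_pow ⟨k, by ring⟩
  have equiv : (∑ i ∈ Finset.range (k+1), a i * (-1:R)^i = -1) ↔
      ∑ i ∈ Finset.range (k+1), (-1:R)^(k-i) * a i = (-1:R)^(k+1) := by
    rw [hsum]
    constructor
    · intro h; rw [h, pow_succ]
    · intro h
      have := congrArg (fun x => ((-1:R)^k) * x) h
      rwa [← mul_assoc, hkk, one_mul, hodd] at this
  rw [← equiv]
  constructor
  · rintro ⟨α, h⟩
    have hα : ∀ m : ℕ, k ≤ m + (j + 1) → α m = -1 := by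
      intro m hm
      set n := m + (j + 1) with hn
      have h2 := (h n hm).2
      have hsub : n - (j + 1) = m := by omega
      rw [Finset.prod_Icc_succ_top (Nat.le_add_left 1 j), hsub, mul_inv_rev] at h2
      set P := (∏ l ∈ Finset.Icc 1 j, α (n - l))⁻¹ with hP
      have h3 : (1 + (((α m)⁻¹ : Rˣ) : R)) * (P : R) = 0 := by
        push_cast at h2 ⊢
        linear_combination h2
      have h4 : (1 : R) + (((α m)⁻¹ : Rˣ) : R) = 0 :=
        (Units.mul_left_eq_zero P).mp h3
      have h5 : ((α m)⁻¹ : Rˣ) = -1 := by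
        refine Units.ext ?_
        rw [Units.val_neg, Units.val_one]
        linear_combination h4
      rw [← inv_inv (α m), h5, inv_neg_one]
    have h1 := (h (2*k) (by omega)).1
    rw [hα (2*k) (by omega), Units.val_neg, Units.val_one] at h1
    calc ∑ i ∈ Finset.range (k+1), a i * (-1:R)^i
        = ∑ i ∈ Finset.range (k + 1),
            a i * (((∏ l ∈ Finset.Icc 1 i, α (2*k - l))⁻¹ : Rˣ) : R) := by
          refine Finset.sum_congr rfl fun i hi => ?_
          have hi' : i ≤ k := Nat.lt_succ_iff.mp (Finset.mem_range.mp hi)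
          congr 1
          rw [show (∏ l ∈ Finset.Icc 1 i, α (2*k - l)) = ∏ l ∈ Finset.Icc 1 i, (-1:Rˣ) from
            Finset.prod_congr rfl fun l hl => by
              have := Finset.mem_Icc.mp hl
              exact hα _ (by omega)]
          exact (key i).symm
      _ = -1 := h1
  · intro hs
    refine ⟨fun _ => -1, fun n hn => ⟨?_, ?_⟩⟩
    · rw [Units.val_neg, Units.val_one]
      calc ∑ i ∈ Finset.range (k + 1),
            a i * (((∏ l ∈ Finset.Icc 1 i, (-1 : Rˣ))⁻¹ : Rˣ) : R)
          = ∑ i ∈ Finset.range (k+1), a i * (-1)^i := by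
            exact Finset.sum_congr rfl fun i _ => by rw [key]
        _ = -1 := hs
    · rw [key, key, pow_succ]
      ring
end

section
/- Let G be a group and k ≥ 1 an integer. For each n ∈ ℤ let f_n : G^{k+1} → G be a function and h_n : G → G a bijection. Define the unfolding maps F_n : G^{k+1} → G^{k+1} by F_n(u_0, …, u_k) = (f_n(u_0, …, u_k), u_0, …, u_{k−1}) and the maps H_n : G^{k+1} → G^{k} by H_n(u_0, …, u_k) = (u_0 · h_n(u_1), u_1 · h_{n−1}(u_2), …, u_{k−1} · h_{n−k+1}(u_k)). For u_0, v_1, …, v_k ∈ G define ζ_{0,n}(u_0) = u_0 and, for j = 1, …, k, ζ_{j,n}(u_0, v_1, …, v_j) = h_{n−j+1}^{−1}(ζ_{j−1,n}(u_0, v_1, …, v_{j−1})^{−1} · v_j). Then there exists a family of maps Φ_n : G^{k} → G^{k} (n ∈ ℤ) satisfying the semiconjugate relation H_{n+1} ∘ F_n = Φ_n ∘ H_n for all n ∈ ℤ if and only if, for every n ∈ ℤ and all v_1, …, v_k ∈ G, the element f_n(ζ_{0,n}(u_0), ζ_{1,n}(u_0, v_1), …, ζ_{k,n}(u_0, v_1,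 …, v_k)) · h_{n+1}(u_0) of G is independent of u_0 ∈ G. -/
/-- The standard unfolding `F_n(u_0,…,u_k) = (f_n(u_0,…,u_k), u_0, …, u_{k-1})`. -/
def unfoldMap {G : Type*} [Group G] (k : ℕ) (f : ℤ → (Fin (k + 1) → G) → G)
    (n : ℤ) (u : Fin (k + 1) → G) : Fin (k + 1) → G :=
  fun j => if j.val = 0 then f n u else u ⟨j.val - 1, by have := j.isLt; omega⟩

/-- The form symmetry `H_n(u_0,…,u_k) = (u_0 · h_n(u_1), u_1 · h_{n-1}(u_2), …,
`u_{k-1} · h_{n-k+1}(u_k))`. -/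
def formSym {G : Type*} [Group G] (k : ℕ) (h : ℤ → G ≃ G)
    (n : ℤ) (u : Fin (k + 1) → G) : Fin k → G :=
  fun i => u ⟨i.val, by have := i.isLt; omega⟩ *
    h (n - (i.val : ℤ)) (u ⟨i.val + 1, by have := i.isLt; omega⟩)

/-- The recursion `ζ_{0,n}(u_0) = u_0`,
`ζ_{j,n}(u_0,v_1,…,v_j) = h_{n-j+1}^{-1}(ζ_{j-1,n}(u_0,v_1,…,v_{j-1})^{-1} · v_j)`. -/
def zetaSeq {G : Type*} [Group G] (h : ℤ → G ≃ G) (n : ℤ) (u0 : G) (v : ℕ → G) :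
    ℕ → G
  | 0 => u0
  | j + 1 => (h (n - (j : ℤ))).symm ((zetaSeq h n u0 v j)⁻¹ * v (j + 1))

/-- If `v (j+1)` matches the form-symmetry values of `u`, then the zeta recursion
starting at `u 0` recovers `u`. -/
lemma zeta_eq_of {G : Type*} [Group G] {k : ℕ} (h : ℤ → G ≃ G) (n : ℤ)
    (u : Fin (k + 1) → G) (v : ℕ → G)
    (hv : ∀ j (hj : j < k), v (j + 1) = formSym k h n u ⟨j, hj⟩) :
    ∀ j (hj : j ≤ k), zetaSeq h n (u ⟨0, by omega⟩) v j = u ⟨j, by omega⟩ := by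
  intro j
  induction j with
  | zero => intro _; rfl
  | succ j ih =>
    intro hj
    have hjk : j < k := by omega
    rw [zetaSeq, ih (by omega), hv j hjk, formSym]
    simp

theorem stmt18 {G : Type*} [Group G] (k : ℕ) (hk : 1 ≤ k)
    (f : ℤ → (Fin (k + 1) → G) → G) (h : ℤ → G ≃ G) :
    (∃ Φ : ℤ → (Fin k → G) → (Fin k → G),
      ∀ n : ℤ, formSym k h (n + 1) ∘ unfoldMap k f n = Φ n ∘ formSym k h n) ↔
    (∀ n : ℤ, ∀ v : ℕ → G, ∀ u0 u0' : G,
      f n (fun j : Fin (k + 1) => zetaSeq h n u0 v j.val) * h (n + 1) u0 =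
      f n (fun j : Fin (k + 1) => zetaSeq h n u0' v j.val) * h (n + 1) u0') := by
  have h0 : (0 : ℕ) < k := hk
  have key : ∀ (n : ℤ) (w : Fin (k + 1) → G),
      formSym k h (n + 1) (unfoldMap k f n w) ⟨0, h0⟩
        = f n w * h (n + 1) (w ⟨0, by omega⟩) := by
    intro n w
    simp [formSym, unfoldMap]
  constructor
  · rintro ⟨Φ, hΦ⟩ n v u0 u0'
    set u : Fin (k + 1) → G := fun j => zetaSeq h n u0 v j.val with hu
    set u' : Fin (k + 1) → G := fun j => zetaSeq h n u0' v j.val with hu'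
    have hform : ∀ w0 : G, formSym k h n (fun j => zetaSeq h n w0 v j.val)
        = fun i : Fin k => v (i.val + 1) := by
      intro w0
      funext i
      simp [formSym, zetaSeq]
    have hH : formSym k h n u = formSym k h n u' := by
      rw [hu, hu', hform, hform]
    have e1 := congrFun (congrFun (hΦ n) u) ⟨0, h0⟩
    have e2 := congrFun (congrFun (hΦ n) u') ⟨0, h0⟩
    simp only [Function.comp_apply, hH, key] at e1 e2
    exact e1.trans e2.symm
  · intro hcond
    refine ⟨fun n w j => if hj : j.val = 0 then
        f n (fun i : Fin (k + 1) =>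
          zetaSeq h n 1 (fun m => if hm : 1 ≤ m ∧ m ≤ k then w ⟨m - 1, by omega⟩ else 1) i.val)
          * h (n + 1) 1
      else w ⟨j.val - 1, by have := j.isLt; omega⟩, ?_⟩
    intro n
    funext u i
    simp only [Function.comp_apply]
    by_cases hi : i.val = 0
    · have hi0 : i = ⟨0, h0⟩ := by ext; exact hi
      subst hi0
      rw [key]
      simp only [dif_pos rfl]
      set vW : ℕ → G := fun m => if hm : 1 ≤ m ∧ m ≤ k then
          formSym k h n u ⟨m - 1, by omega⟩ else 1 with hvW
      have hz : ∀ j (hj : j ≤ k), zetaSeq h n (u ⟨0, by omega⟩) vW j = u ⟨j, by omega⟩ := by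
        refine zeta_eq_of h n u vW ?_
        intro j hj
        simp only [hvW]
        rw [dif_pos ⟨by omega, by omega⟩]
        rfl
      have := hcond n vW (u ⟨0, by omega⟩) 1
      rw [show (fun j : Fin (k + 1) => zetaSeq h n (u ⟨0, by omega⟩) vW j.val)
          = u from funext fun j => hz j.val (by omega)] at this
      exact this
    · rw [dif_neg hi]
      have h1 : i.val - 1 < k := by have := i.isLt; omega
      show unfoldMap k f n u ⟨i.val, by omega⟩ *
          h (n + 1 - (i.val : ℤ)) (unfoldMap k f n u ⟨i.val + 1, by omega⟩)
        = u ⟨i.val - 1, by omega⟩ * h (n - ((i.val - 1 : ℕ) : ℤ)) (u ⟨i.val - 1 + 1, by omega⟩)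
      rw [unfoldMap, unfoldMap]
      simp only [dif_neg hi]
      have e1 : n + 1 - (i.val : ℤ) = n - ((i.val - 1 : ℕ) : ℤ) := by
        have : 1 ≤ i.val := by omega
        push_cast [this]
        ring
      have e2 : i.val - 1 + 1 = i.val := by omega
      simp only [if_neg hi, if_neg (by omega : ¬ i.val + 1 = 0)]
      rw [e1]
      have e3 : i.val + 1 - 1 = i.val - 1 + 1 := by omega
      simp only [e3]
end

section
/- Let F be a field, V a vector space over F, k ≥ 1 an integer, a_{i,n}, b_{i,n} ∈ F for 0 ≤ i ≤ k and n ≥ 0, and g_n : V → V maps for n ≥ 0. Suppose {α_n}_{n≥0} is a sequence of nonzero elements of F such that for every n ≥ k both a_{0,n} + a_{1,n}α_{n−1}^{−1} + a_{2,n}(α_{n−1}α_{n−2})^{−1} + ⋯ + a_{k,n}(α_{n−1}α_{n−2}⋯α_{n−k})^{−1} = α_n and b_{0,n} + b_{1,n}α_{n−1}^{−1} + ⋯ + b_{k,n}(α_{n−1}⋯α_{n−k})^{−1} = 0 hold. Then a sequence {x_n}_{n≥0} in V satisfies x_{n+1} = Σ_{i=0}^{k} a_{i,n} x_{n−i} +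 g_n(Σ_{i=0}^{k} b_{i,n} x_{n−i}) for all n ≥ k if and only if the sequence t defined by t_n = x_n − α_{n−1} x_{n−1} (for n ≥ 1) satisfies, for all n ≥ k, t_{n+1} = −Σ_{j=1}^{k} Σ_{i=1}^{j} a_{j,n} γ_{ij}^{−1} t_{n−i+1} + g_n(−Σ_{j=1}^{k} Σ_{i=1}^{j} b_{j,n} γ_{ij}^{−1} t_{n−i+1}), where γ_{ij} = α_{n−i}α_{n−i−1}⋯α_{n−j}. -/
lemma aux1 {F V : Type*} [Field F] [AddCommGroup V] [Module F V]
    (α : ℕ → F) (hα : ∀ n, α n ≠ 0) (x t : ℕ → V)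
    (ht : ∀ n, 1 ≤ n → t n = x n - α (n - 1) • x (n - 1)) (n : ℕ) :
    ∀ j, j ≤ n → x (n - j) = (∏ l ∈ Finset.Icc 1 j, α (n - l))⁻¹ •
      (x n - ∑ i ∈ Finset.Icc 1 j, (∏ l ∈ Finset.Icc 1 (i - 1), α (n - l)) • t (n - i + 1)) := by
  intro j
  induction j with
  | zero => simp
  | succ j IH =>
    intro hj
    have hj' : j ≤ n := by omega
    have h1 := ht (n - j) (by omega)
    have hx : x (n - (j + 1)) = (α (n - (j + 1)))⁻¹ • (x (n - j) - t (n - j)) := by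
      have e1 : n - j - 1 = n - (j + 1) := by omega
      rw [e1] at h1
      rw [h1, sub_sub_cancel, inv_smul_smul₀ (hα _)]
    rw [hx, IH hj']
    rw [Finset.prod_Icc_succ_top (by omega), Finset.sum_Icc_succ_top (by omega)]
    have e2 : n - (j + 1) + 1 = n - j := by omega
    rw [e2]
    have hP : (∏ l ∈ Finset.Icc 1 j, α (n - l)) ≠ 0 :=
      Finset.prod_ne_zero_iff.2 fun l _ => hα _
    have e3 : (j + 1 : ℕ) - 1 = j := by omega
    rw [e3]
    match_scalars <;> (field_simp; try (rw [div_eq_div_iff (by first | exact hα _ | exact hP | exact mul_ne_zero (hα _) hP | exact mul_ne_zero hP (hα _)) (by first | exact hα _ | exact hP | exact mul_ne_zero (hα _) hP | exact mul_ne_zero hP (hα _))]; ring))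

lemma aux2 {F V : Type*} [Field F] [AddCommGroup V] [Module F V]
    (α : ℕ → F) (hα : ∀ n, α n ≠ 0) (x t : ℕ → V)
    (ht : ∀ n, 1 ≤ n → t n = x n - α (n - 1) • x (n - 1)) (c : ℕ → F) (k n : ℕ)
    (hn : k ≤ n) :
    ∑ j ∈ Finset.range (k + 1), c j • x (n - j)
      = (∑ j ∈ Finset.range (k + 1), c j * (∏ l ∈ Finset.Icc 1 j, α (n - l))⁻¹) • x n
        - ∑ j ∈ Finset.Icc 1 k, ∑ i ∈ Finset.Icc 1 j,
            (c j * (∏ l ∈ Finset.Icc i j, α (n - l))⁻¹) • t (n - i + 1) := by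
  have key : ∀ j ∈ Finset.range (k + 1), c j • x (n - j)
      = (c j * (∏ l ∈ Finset.Icc 1 j, α (n - l))⁻¹) • x n
        - ∑ i ∈ Finset.Icc 1 j, (c j * (∏ l ∈ Finset.Icc i j, α (n - l))⁻¹) • t (n - i + 1) := by
    intro j hj
    rw [Finset.mem_range] at hj
    rw [aux1 α hα x t ht n j (by omega)]
    rw [smul_smul, smul_sub]
    congr 1
    rw [Finset.smul_sum]
    refine Finset.sum_congr rfl fun i hi => ?_
    rw [Finset.mem_Icc] at hi
    rw [smul_smul]
    congr 1
    have hsplit : (∏ l ∈ Finset.Icc 1 (i - 1), α (n - l)) * ∏ l ∈ Finset.Icc i j, α (n - l)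
        = ∏ l ∈ Finset.Icc 1 j, α (n - l) := by
      have e : Finset.Icc i j = Finset.Ioc (i - 1) j := by
        ext m; simp [Finset.mem_Icc, Finset.mem_Ioc]; omega
      have e' : Finset.Icc 1 (i - 1) = Finset.Ioc 0 (i - 1) := by
        ext m; simp [Finset.mem_Icc, Finset.mem_Ioc]; omega
      have e'' : Finset.Icc 1 j = Finset.Ioc 0 j := by
        ext m; simp [Finset.mem_Icc, Finset.mem_Ioc]; omega
      rw [e, e', e'', Finset.prod_Ioc_consecutive _ (by omega) (by omega)]
    have hPj : (∏ l ∈ Finset.Icc 1 j, α (n - l)) ≠ 0 :=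
      Finset.prod_ne_zero_iff.2 fun l _ => hα _
    have hPij : (∏ l ∈ Finset.Icc i j, α (n - l)) ≠ 0 :=
      Finset.prod_ne_zero_iff.2 fun l _ => hα _
    field_simp
    rw [← hsplit]; ring
  rw [Finset.sum_congr rfl key, Finset.sum_sub_distrib, ← Finset.sum_smul]
  congr 1
  rw [Finset.range_eq_Ico, Finset.sum_eq_sum_Ico_succ_bot (by omega), Finset.Ico_add_one_right_eq_Icc]
  simp

theorem stmt19 {F V : Type*} [Field F] [AddCommGroup V] [Module F V]
    (k : ℕ) (hk : 1 ≤ k) (a b : ℕ → ℕ → F) (g : ℕ → V → V)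
    (α : ℕ → F) (hα : ∀ n, α n ≠ 0)
    (hesa : ∀ n, k ≤ n →
      ∑ i ∈ Finset.range (k + 1),
        a i n * (∏ l ∈ Finset.Icc 1 i, α (n - l))⁻¹ = α n)
    (hesb : ∀ n, k ≤ n →
      ∑ i ∈ Finset.range (k + 1),
        b i n * (∏ l ∈ Finset.Icc 1 i, α (n - l))⁻¹ = 0)
    (x t : ℕ → V)
    (ht : ∀ n, 1 ≤ n → t n = x n - α (n - 1) • x (n - 1)) :
    (∀ n, k ≤ n →
      x (n + 1) = ∑ i ∈ Finset.range (k + 1), a i n • x (n - i) +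
        g n (∑ i ∈ Finset.range (k + 1), b i n • x (n - i))) ↔
    (∀ n, k ≤ n →
      t (n + 1) =
        -(∑ j ∈ Finset.Icc 1 k, ∑ i ∈ Finset.Icc 1 j,
            (a j n * (∏ l ∈ Finset.Icc i j, α (n - l))⁻¹) • t (n - i + 1)) +
        g n (-(∑ j ∈ Finset.Icc 1 k, ∑ i ∈ Finset.Icc 1 j,
            (b j n * (∏ l ∈ Finset.Icc i j, α (n - l))⁻¹) • t (n - i + 1)))) := by
  have hxa : ∀ n, k ≤ n → ∑ i ∈ Finset.range (k + 1), a i n • x (n - i)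
      = α n • x n - ∑ j ∈ Finset.Icc 1 k, ∑ i ∈ Finset.Icc 1 j,
          (a j n * (∏ l ∈ Finset.Icc i j, α (n - l))⁻¹) • t (n - i + 1) := by
    intro n hn
    have := aux2 α hα x t ht (fun i => a i n) k n hn
    simpa [hesa n hn] using this
  have hxb : ∀ n, k ≤ n → ∑ i ∈ Finset.range (k + 1), b i n • x (n - i)
      = -(∑ j ∈ Finset.Icc 1 k, ∑ i ∈ Finset.Icc 1 j,
          (b j n * (∏ l ∈ Finset.Icc i j, α (n - l))⁻¹) • t (n - i + 1)) := by
    intro n hn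
    have := aux2 α hα x t ht (fun i => b i n) k n hn
    simpa [hesb n hn] using this
  have htn : ∀ n, k ≤ n → t (n + 1) = x (n + 1) - α n • x n := by
    intro n hn
    have := ht (n + 1) (by omega)
    simpa using this
  constructor
  · intro h n hn
    rw [htn n hn, h n hn, hxa n hn, hxb n hn]
    abel
  · intro h n hn
    have hxt : x (n + 1) = t (n + 1) + α n • x n := by rw [htn n hn]; abel
    rw [hxt, h n hn, hxa n hn, hxb n hn]
    abel
end
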